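/- arXiv:1903.10331 — 7 statements merged into one kernel-verified Lean document; each statement's English description precedes it below -/
import Mathlib

section
/- A subset L ⊆ H is a maximal commutative subfield of H (i.e., L is a commutative subring of H containing F·1 in which every nonzero element is invertible with inverse in L, and no commutative subfield of H properly contains L) if and only if L is a 2-dimensional F-subspace of H containing 1; in other words, the lines of 𝒜 are precisely the maximal subfields of H. -/
variable (F H : Type*) [Field F] [DivisionRing H] [Algebra F H]

/-- A *line* of the projective space `ℙ(H_F)`: a 2-dimensional `F`-subspace of `H`. -/
abbrev Line := {M : Submodule F H // Module.finrank F M = 2}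

/-- `M ∥ℓ N` : there is `g ≠ 0` with `N = g·M`. -/
def LeftPar (M N : Submodule F H) : Prop :=
  ∃ g : H, g ≠ 0 ∧ (N : Set H) = (fun m => g * m) '' (M : Set H)

/-- `M ∥r N` : there is `g ≠ 0` with `N = M·g`. -/
def RightPar (M N : Submodule F H) : Prop :=
  ∃ g : H, g ≠ 0 ∧ (N : Set H) = (fun m => m * g) '' (M : Set H)

/-- The left parallel class `Sℓ(M) = {N | N ∥ℓ M}`. -/
def leftClass (M : Line F H) : Set (Line F H) := {N | LeftPar F H N.1 M.1}

/-- The right parallel class `Sr(M) = {N | N ∥r M}`. -/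
def rightClass (M : Line F H) : Set (Line F H) := {N | RightPar F H N.1 M.1}

/-- The `∥`-class `S(M) = {N | N ∥ M}`. -/
def parClass (par : Line F H → Line F H → Prop) (M : Line F H) : Set (Line F H) :=
  {N | par N M}

/-- A parallelism: an equivalence relation on lines such that for every `x ≠ 0`
and every line `M` there is exactly one line `N` with `x ∈ N` and `N ∥ M`. -/
def IsParallelism (par : Line F H → Line F H → Prop) : Prop :=
  Equivalence par ∧
    ∀ x : H, x ≠ 0 → ∀ M : Line F H, ∃! N : Line F H, x ∈ N.1 ∧ par N M

/-- A Clifford-like parallelism: every `∥`-class is a left or a right parallel class. -/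
def IsCliffordLike (par : Line F H → Line F H → Prop) : Prop :=
  IsParallelism F H par ∧
    ∀ M : Line F H,
      parClass F H par M = leftClass F H M ∨ parClass F H par M = rightClass F H M

/-- The star `𝒜` of lines through `F·1`, i.e. the lines containing `1`. -/
def starLines : Set (Line F H) := {L | (1 : H) ∈ L.1}

/-- The set `ℱ` of lines of `𝒜` whose `∥`-class is a left parallel class. -/
def calF (par : Line F H → Line F H → Prop) : Set (Line F H) :=
  {L | (1 : H) ∈ L.1 ∧ parClass F H par L = leftClass F H L}

/-- A semilinear bijection of `H` (over some field automorphism of `F`). -/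
def IsSemilinear (β : H → H) : Prop :=
  Function.Bijective β ∧ (∀ x y : H, β (x + y) = β x + β y) ∧
    ∃ σ : F ≃+* F, ∀ (a : F) (x : H), β (a • x) = σ a • β x

/-- `β` preserves the parallelism `par`: for all lines `M, N`,
`M ∥ N ↔ β(M) ∥ β(N)`, where `β(M)` denotes the line whose carrier is `β '' M`. -/
def Preserves (β : H → H) (par : Line F H → Line F H → Prop) : Prop :=
  ∀ M N M' N' : Line F H,
    (M'.1 : Set H) = β '' (M.1 : Set H) →
    (N'.1 : Set H) = β '' (N.1 : Set H) →
    (par M N ↔ par M' N')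

/-- The image `β(𝒢)` of a set of lines under `β`. -/
def imageLines (β : H → H) (G : Set (Line F H)) : Set (Line F H) :=
  {L' | ∃ L ∈ G, (L'.1 : Set H) = β '' (L.1 : Set H)}

/-- The centre of `H` is exactly `F·1`. -/
def CenterEqF : Prop :=
  ∀ z : H, (∀ x : H, z * x = x * z) ↔ ∃ a : F, z = algebraMap F H a

/-- Ring automorphism of `H`, as a plain function. -/
def IsRingAutFn (α : H → H) : Prop :=
  Function.Bijective α ∧ (∀ x y : H, α (x + y) = α x + α y) ∧ α 1 = 1 ∧
    ∀ x y : H, α (x * y) = α x * α y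

/-- Ring antiautomorphism of `H`, as a plain function. -/
def IsRingAntiAutFn (α : H → H) : Prop :=
  Function.Bijective α ∧ (∀ x y : H, α (x + y) = α x + α y) ∧ α 1 = 1 ∧
    ∀ x y : H, α (x * y) = α y * α x

/-- `L` is a commutative subfield of `H`: a commutative subring containing `F·1`
in which every nonzero element has its inverse in `L`. -/
def IsCommSubfield (L : Set H) : Prop :=
  (∀ a : F, algebraMap F H a ∈ L) ∧
  (∀ x ∈ L, ∀ y ∈ L, x + y ∈ L) ∧
  (∀ x ∈ L, -x ∈ L) ∧
  (∀ x ∈ L, ∀ y ∈ L, x * y ∈ L) ∧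
  (∀ x ∈ L, ∀ y ∈ L, x * y = y * x) ∧
  (∀ x ∈ L, x ≠ 0 → x⁻¹ ∈ L)

/-!
For a non-scalar `x`, the centralizer `C(x)` is a division subalgebra containing `F + F x`, so
`2 ≤ dim C(x)`; its dimension divides `dim H = 4` because `H` is a left vector space over it, and
it is not `H` because `x` is not central. Hence `C(x) = F + F x`, which is therefore commutative
and a maximal commutative subfield, since every commutative subfield containing `x` lies in
`C(x)`. Conversely a maximal commutative subfield contains some non-scalar `x`, hence lies in, and
so equals, `C(x) = F + F x`; and every line through `1` is `F + F x` for any non-scalar `x` on it.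
-/

open Module

theorem Subalgebra.finrank_dvd_finrank {F A : Type*} [Field F] [Ring A] [IsDomain A] [Algebra F A]
    [FiniteDimensional F A] (K : Subalgebra F A) : finrank F K ∣ finrank F A :=
  let := divisionRingOfFiniteDimensional F K
  ⟨_, (finrank_mul_finrank F K A).symm⟩

theorem Subalgebra.mem_centralizer_singleton_iff (R : Type*) {A : Type*} [CommSemiring R]
    [Semiring A] [Algebra R A] {x y : A} : y ∈ centralizer R {x} ↔ x * y = y * x := by
  simp only [mem_centralizer_iff, Set.mem_singleton_iff, forall_eq]

section

variable {F H : Type*} [Field F] [DivisionRing H] [Algebra F H]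

variable (F H) in
def IsMaximalCommSubfield (L : Set H) : Prop :=
  IsCommSubfield F H L ∧ ∀ L' : Set H, IsCommSubfield F H L' → L ⊆ L' → L' = L

theorem IsCommSubfield.subset_centralizer {L : Set H} (hL : IsCommSubfield F H L) {x : H}
    (hx : x ∈ L) : L ⊆ Subalgebra.centralizer F {x} := by
  obtain ⟨-, -, -, -, hcomm, -⟩ := hL
  exact fun y hy => (Subalgebra.mem_centralizer_singleton_iff F).mpr (hcomm x hx y hy)

theorem isMaximalCommSubfield_centralizer {x : H}
    (hcomm : ∀ a ∈ Subalgebra.centralizer F {x}, ∀ b ∈ Subalgebra.centralizer F {x},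
      a * b = b * a) :
    IsMaximalCommSubfield F H (Subalgebra.centralizer F {x}) := by
  set C := Subalgebra.centralizer F {x}
  have hxC : x ∈ C := (Subalgebra.mem_centralizer_singleton_iff F).mpr rfl
  refine ⟨⟨C.algebraMap_mem, fun _ ha _ hb => C.add_mem ha hb, fun _ ha => C.neg_mem ha,
    fun _ ha _ hb => C.mul_mem ha hb, hcomm, fun a ha _ => ?_⟩, fun L' hL' hCL' => ?_⟩
  · exact (Subalgebra.mem_centralizer_singleton_iff F).mpr
      (show Commute x a from (Subalgebra.mem_centralizer_singleton_iff F).mp ha).inv_right₀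
  · exact (hL'.subset_centralizer (hCL' hxC)).antisymm hCL'

theorem mul_comm_of_mem_span_one_pair {x y z : H} (hy : y ∈ Submodule.span F {1, x})
    (hz : z ∈ Submodule.span F {1, x}) : y * z = z * y := by
  obtain ⟨a, b, rfl⟩ := Submodule.mem_span_pair.mp hy
  obtain ⟨c, d, rfl⟩ := Submodule.mem_span_pair.mp hz
  simp only [add_mul, mul_add, smul_mul_assoc, mul_smul_comm, one_mul, mul_one]
  module

theorem finrank_span_one_pair {x : H} (hx : x ∉ (⊥ : Subalgebra F H)) :
    finrank F (Submodule.span F {1, x}) = 2 := by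
  have hli : LinearIndependent F ![(1 : H), x] :=
    (LinearIndependent.pair_iff' one_ne_zero).mpr fun a hax =>
      hx (hax ▸ (⊥ : Subalgebra F H).smul_mem (one_mem _) a)
  have := finrank_span_eq_card hli
  rwa [Matrix.range_cons_cons_empty, Fintype.card_fin] at this

theorem exists_mem_notMem_bot_of_one_lt_finrank [FiniteDimensional F H] {M : Submodule F H}
    (hM : 1 < finrank F M) : ∃ x ∈ M, x ∉ (⊥ : Subalgebra F H) := by
  by_contra! h
  have := Submodule.finrank_mono (show M ≤ Subalgebra.toSubmodule ⊥ from h)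
  rw [Subalgebra.finrank_toSubmodule, Subalgebra.finrank_bot] at this
  omega

theorem toSubmodule_centralizer_eq_span_one_pair (hcenter : CenterEqF F H) (hdim : finrank F H = 4)
    {x : H} (hx : x ∉ (⊥ : Subalgebra F H)) :
    Subalgebra.toSubmodule (Subalgebra.centralizer F {x}) = Submodule.span F {1, x} := by
  have : FiniteDimensional F H := .of_finrank_pos (by omega)
  set C := Subalgebra.centralizer F {x}
  have hle : Submodule.span F {1, x} ≤ Subalgebra.toSubmodule C :=
    Submodule.span_le.mpr (Set.pair_subset C.one_mem
      ((Subalgebra.mem_centralizer_singleton_iff F).mpr rfl))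
  have hge : 2 ≤ finrank F C := finrank_span_one_pair hx ▸ Submodule.finrank_mono hle
  have hne : finrank F C ≠ 4 := by
    intro h4
    have htop : Subalgebra.toSubmodule C = ⊤ :=
      Submodule.eq_top_of_finrank_eq (C.finrank_toSubmodule.trans (h4.trans hdim.symm))
    have hmem (y : H) : y ∈ Subalgebra.toSubmodule C := htop ▸ Submodule.mem_top
    obtain ⟨a, rfl⟩ :=
      (hcenter x).mp fun y => (Subalgebra.mem_centralizer_singleton_iff F).mp (hmem y)
    exact hx (Subalgebra.algebraMap_mem _ a)
  have hC : finrank F C = 2 := by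
    have hdvd := hdim ▸ C.finrank_dvd_finrank
    have := Nat.le_of_dvd (by norm_num) hdvd
    interval_cases finrank F C <;> omega
  exact (Submodule.eq_of_le_of_finrank_eq hle
    (by rw [finrank_span_one_pair hx, Subalgebra.finrank_toSubmodule, hC])).symm

theorem isMaximalCommSubfield_span_one_pair (hcenter : CenterEqF F H) (hdim : finrank F H = 4)
    {x : H} (hx : x ∉ (⊥ : Subalgebra F H)) :
    IsMaximalCommSubfield F H (Submodule.span F {1, x}) := by
  have hC : (Subalgebra.centralizer F {x} : Set H) = Submodule.span F {1, x} :=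
    congrArg ((↑) : Submodule F H → Set H)
      (toSubmodule_centralizer_eq_span_one_pair hcenter hdim hx)
  rw [← hC]
  exact isMaximalCommSubfield_centralizer fun a ha b hb =>
    mul_comm_of_mem_span_one_pair (hC.subset ha) (hC.subset hb)

theorem IsMaximalCommSubfield.eq_span_one_pair (hcenter : CenterEqF F H)
    (hdim : finrank F H = 4) {L : Set H} (hL : IsMaximalCommSubfield F H L) {x : H} (hxL : x ∈ L)
    (hx : x ∉ (⊥ : Subalgebra F H)) : L = Submodule.span F {1, x} := by
  have hLC := hL.1.subset_centralizer hxL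
  rw [← Subalgebra.coe_toSubmodule,
    toSubmodule_centralizer_eq_span_one_pair hcenter hdim hx] at hLC
  exact (hL.2 _ (isMaximalCommSubfield_span_one_pair hcenter hdim hx).1 hLC).symm

theorem IsMaximalCommSubfield.exists_mem_notMem_bot (hcenter : CenterEqF F H)
    (hdim : finrank F H = 4) {L : Set H} (hL : IsMaximalCommSubfield F H L) :
    ∃ x ∈ L, x ∉ (⊥ : Subalgebra F H) := by
  have : FiniteDimensional F H := .of_finrank_pos (by omega)
  by_contra! hLbot
  obtain ⟨x, -, hx⟩ := exists_mem_notMem_bot_of_one_lt_finrank (M := ⊤)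
    (by rw [finrank_top, hdim]; norm_num)
  have hLS : L ⊆ Submodule.span F {1, x} := fun y hy => by
    obtain ⟨a, rfl⟩ := Algebra.mem_bot.mp (hLbot y hy)
    rw [Algebra.algebraMap_eq_smul_one]
    exact Submodule.smul_mem _ a (Submodule.subset_span (by simp))
  have hSL := hL.2 _ (isMaximalCommSubfield_span_one_pair hcenter hdim hx).1 hLS
  exact hx (hLbot x (hSL ▸ Submodule.subset_span (by simp)))

end

/-- A subset of `H` is a maximal commutative subfield if and only if it is the
carrier of a 2-dimensional `F`-subspace of `H` containing `1`. -/
theorem maximal_subfield_iff_line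
    (hcenter : CenterEqF F H) (hdim : Module.finrank F H = 4) (L : Set H) :
    (IsCommSubfield F H L ∧
        ∀ L' : Set H, IsCommSubfield F H L' → L ⊆ L' → L' = L) ↔
      ∃ M : Submodule F H, Module.finrank F M = 2 ∧ (1 : H) ∈ M ∧ (M : Set H) = L := by
  have : FiniteDimensional F H := .of_finrank_pos (by omega)
  constructor
  · intro hL
    obtain ⟨x, hxL, hx⟩ := IsMaximalCommSubfield.exists_mem_notMem_bot hcenter hdim hL
    exact ⟨_, finrank_span_one_pair hx, Submodule.subset_span (by simp),
      (IsMaximalCommSubfield.eq_span_one_pair hcenter hdim hL hxL hx).symm⟩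
  · rintro ⟨M, hM, h1M, rfl⟩
    obtain ⟨x, hxM, hx⟩ := exists_mem_notMem_bot_of_one_lt_finrank (hM ▸ one_lt_two)
    have hspan : Submodule.span F {1, x} = M :=
      Submodule.eq_of_le_of_finrank_eq (Submodule.span_le.mpr (Set.pair_subset h1M hxM))
        (by rw [finrank_span_one_pair hx, hM])
    exact hspan ▸ isMaximalCommSubfield_span_one_pair hcenter hdim hx
end

section
/- The relation ∥ℓ is a parallelism: it is an equivalence relation on the set of lines, and for every x ∈ H with x ≠ 0 and every line M there is exactly one line N such that x ∈ N and N ∥ℓ M. The same holds for ∥r. -/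
variable (F H : Type*) [Field F] [DivisionRing H] [Algebra F H]

namespace ParAux

variable {F H}

/-- finrank is preserved by the image under an injective linear map. -/
lemma finrank_map_eq_of_inj (f : H →ₗ[F] H) (hf : Function.Injective f)
    (p : Submodule F H) : Module.finrank F (p.map f) = Module.finrank F p :=
  (Submodule.equivMapOfInjective f hf p).finrank_eq.symm

lemma mulLeft_injective {g : H} (hg : g ≠ 0) :
    Function.Injective ⇑(LinearMap.mulLeft F g) := fun a b hab =>
  mul_right_injective₀ hg (by simpa using hab)

lemma mulRight_injective {g : H} (hg : g ≠ 0) :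
    Function.Injective ⇑(LinearMap.mulRight F g) := fun a b hab =>
  mul_left_injective₀ hg (by simpa using hab)

lemma map_mulLeft_map_mulLeft (a b : H) (p : Submodule F H) :
    (p.map (LinearMap.mulLeft F b)).map (LinearMap.mulLeft F a)
      = p.map (LinearMap.mulLeft F (a * b)) := by
  rw [LinearMap.mulLeft_mul, Submodule.map_comp]

lemma map_mulRight_map_mulRight (a b : H) (p : Submodule F H) :
    (p.map (LinearMap.mulRight F a)).map (LinearMap.mulRight F b)
      = p.map (LinearMap.mulRight F (a * b)) := by
  rw [LinearMap.mulRight_mul, Submodule.map_comp]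

lemma map_mulLeft_cancel {g : H} (hg : g ≠ 0) (p : Submodule F H) :
    (p.map (LinearMap.mulLeft F g)).map (LinearMap.mulLeft F g⁻¹) = p := by
  rw [map_mulLeft_map_mulLeft, inv_mul_cancel₀ hg, LinearMap.mulLeft_one, Submodule.map_id]

lemma map_mulRight_cancel {g : H} (hg : g ≠ 0) (p : Submodule F H) :
    (p.map (LinearMap.mulRight F g)).map (LinearMap.mulRight F g⁻¹) = p := by
  rw [map_mulRight_map_mulRight, mul_inv_cancel₀ hg, LinearMap.mulRight_one, Submodule.map_id]

/-- Every element of `H` is quadratic over `F`. -/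
lemma sq_mem_span (hcenter : CenterEqF F H) (hdim : Module.finrank F H = 4) (k : H) :
    k * k ∈ Submodule.span F {(1 : H), k} := by
  haveI : FiniteDimensional F H := FiniteDimensional.of_finrank_eq_succ hdim
  by_contra hnot
  -- k is not a scalar
  have hk1 : k ∉ Submodule.span F {(1 : H)} := by
    intro h
    rcases Submodule.mem_span_singleton.mp h with ⟨c, hc⟩
    refine hnot ?_
    have : k * k = c • k := by
      conv_lhs => rw [← hc, smul_mul_assoc, one_mul]
      rw [hc]
    rw [this]
    exact Submodule.smul_mem _ _ (Submodule.subset_span (by simp))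
  -- the centralizer of k
  set C : Submodule F H :=
    LinearMap.ker (LinearMap.mulLeft F k - LinearMap.mulRight F k) with hCdef
  have memC : ∀ x : H, x ∈ C ↔ k * x = x * k := by
    intro x
    rw [hCdef, LinearMap.mem_ker, LinearMap.sub_apply, LinearMap.mulLeft_apply,
      LinearMap.mulRight_apply, sub_eq_zero]
  -- k is not central
  have hne : C ≠ ⊤ := by
    intro h
    refine hk1 ?_
    have hcomm : ∀ x : H, k * x = x * k := fun x => (memC x).mp (h ▸ Submodule.mem_top)
    rcases (hcenter k).mp hcomm with ⟨a, ha⟩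
    rw [ha, Algebra.algebraMap_eq_smul_one]
    exact Submodule.smul_mem _ _ (Submodule.subset_span rfl)
  -- {k*k, k, 1} is linearly independent
  have hrange : Set.range ![k * k, k, (1 : H)] = {k * k, k, 1} := by
    simp [Matrix.range_cons, Matrix.range_empty, Set.insert_comm, Set.pair_comm]
  have li : LinearIndependent F ![k * k, k, (1 : H)] := by
    have h2 : LinearIndependent F ![k, (1 : H)] := by
      rw [LinearIndependent.pair_iff]
      intro s t hst
      by_cases hs : s = 0
      · subst hs
        simp only [zero_smul, zero_add, smul_eq_zero] at hst
        rcases hst with h | h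
        · exact ⟨rfl, h⟩
        · exact absurd h one_ne_zero
      · exfalso
        apply hk1
        have : k = (-(s⁻¹ * t)) • (1 : H) := by
          have : s • k = -(t • (1 : H)) := by linear_combination (norm := module) hst
          rw [neg_smul, mul_smul, ← smul_neg, ← this, inv_smul_smul₀ hs]
        rw [this]
        exact Submodule.smul_mem _ _ (Submodule.subset_span rfl)
    have : (![k * k, k, (1 : H)] : Fin 3 → H) = Fin.cons (k * k) ![k, (1 : H)] := by
      funext i; fin_cases i <;> rfl
    rw [this, linearIndependent_fin_cons]
    refine ⟨h2, ?_⟩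
    intro hmem
    apply hnot
    have : Set.range ![k, (1 : H)] = {(1 : H), k} := by
      simp [Matrix.range_cons, Matrix.range_empty, Set.pair_comm]
    rw [this] at hmem
    exact hmem
  -- span{k*k,k,1} ≤ C
  have hle : Submodule.span F {k * k, k, (1 : H)} ≤ C := by
    rw [Submodule.span_le]
    rintro z hz
    simp only [Set.mem_insert_iff, Set.mem_singleton_iff] at hz
    rcases hz with rfl | rfl | rfl
    · rw [SetLike.mem_coe, memC, mul_assoc]
    · rw [SetLike.mem_coe, memC]
    · rw [SetLike.mem_coe, memC]; rw [one_mul, mul_one]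
  have h3le : 3 ≤ Module.finrank F C := by
    have := finrank_span_eq_card li
    rw [hrange] at this
    have hmono := Submodule.finrank_mono hle
    rw [this] at hmono
    simpa using hmono
  have hlt : Module.finrank F C < 4 := by
    rw [← hdim]
    have hCt : C < ⊤ := Ne.lt_top hne
    exact Submodule.finrank_lt hCt.ne
  have hC3 : Module.finrank F C = 3 := by omega
  -- choose y outside C
  have hCt : C < ⊤ := Ne.lt_top hne
  obtain ⟨y, -, hy⟩ := SetLike.exists_of_lt hCt
  have hy0 : y ≠ 0 := fun h => hy (h ▸ C.zero_mem)
  -- C is closed under multiplication and inverses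
  have hmul : ∀ a b : H, a ∈ C → b ∈ C → a * b ∈ C := by
    intro a b ha hb
    rw [memC] at ha hb ⊢
    rw [← mul_assoc, ha, mul_assoc, hb, mul_assoc]
  have hinv : ∀ a : H, a ∈ C → a ≠ 0 → a⁻¹ ∈ C := by
    intro a ha ha0
    rw [memC] at ha ⊢
    have h1 : a⁻¹ * (k * a) * a⁻¹ = a⁻¹ * (a * k) * a⁻¹ := by rw [ha]
    rw [← mul_assoc, ← mul_assoc, mul_assoc (a⁻¹ * k), mul_inv_cancel₀ ha0, mul_one,
      inv_mul_cancel₀ ha0, one_mul] at h1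
    exact h1.symm
  -- C ⊓ C·y = ⊥
  set D : Submodule F H := C.map (LinearMap.mulRight F y) with hDdef
  have hD3 : Module.finrank F D = 3 := by
    rw [hDdef, finrank_map_eq_of_inj _ (mulRight_injective hy0), hC3]
  have hinf : C ⊓ D = ⊥ := by
    rw [Submodule.eq_bot_iff]
    rintro z ⟨hzC, hzD⟩
    rcases Submodule.mem_map.mp hzD with ⟨c, hc, rfl⟩
    by_cases hc0 : c = 0
    · simp [hc0]
    · exfalso
      apply hy
      have : y = c⁻¹ * (c * y) := by rw [← mul_assoc, inv_mul_cancel₀ hc0, one_mul]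
      have hz' : (c : H) * y ∈ C := by simpa using hzC
      rw [this]
      exact hmul _ _ (hinv _ hc hc0) hz'
  have hsum := Submodule.finrank_sup_add_finrank_inf_eq C D
  rw [hinf, finrank_bot, hC3, hD3] at hsum
  have hle4 : Module.finrank F ↥(C ⊔ D) ≤ 4 := hdim ▸ Submodule.finrank_le _
  omega


/-- A line through `1` is invariant under multiplication by its nonzero elements. -/
lemma map_line_self (hcenter : CenterEqF F H) (hdim : Module.finrank F H = 4)
    {K : Submodule F H} (hK : Module.finrank F K = 2) (h1 : (1 : H) ∈ K)
    {k : H} (hk : k ∈ K) (hk0 : k ≠ 0) :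
    K.map (LinearMap.mulLeft F k) = K ∧ K.map (LinearMap.mulRight F k) = K := by
  haveI : FiniteDimensional F H := FiniteDimensional.of_finrank_eq_succ hdim
  have key : ∀ x ∈ K, k * x ∈ K ∧ x * k ∈ K := by
    by_cases hks : k ∈ Submodule.span F {(1 : H)}
    · rcases Submodule.mem_span_singleton.mp hks with ⟨c, hc⟩
      intro x hx
      constructor
      · rw [← hc, smul_mul_assoc, one_mul]; exact K.smul_mem _ hx
      · rw [← hc, mul_smul_comm, mul_one]; exact K.smul_mem _ hx
    · have hle : Submodule.span F {(1 : H), k} ≤ K := by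
        rw [Submodule.span_le]
        rintro z hz
        rcases hz with rfl | hz
        · exact h1
        · rw [Set.mem_singleton_iff] at hz; subst hz; exact hk
      have li : LinearIndependent F ![(1 : H), k] := by
        rw [LinearIndependent.pair_iff]
        intro s t hst
        by_cases ht : t = 0
        · subst ht
          simp only [zero_smul, add_zero, smul_eq_zero] at hst
          rcases hst with h | h
          · exact ⟨h, rfl⟩
          · exact absurd h one_ne_zero
        · exfalso
          apply hks
          have hts : t • k = -(s • (1 : H)) := by
            linear_combination (norm := module) hst
          have hk' : k = (-(t⁻¹ * s)) • (1 : H) := by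
            rw [neg_smul, mul_smul, ← smul_neg, ← hts, inv_smul_smul₀ ht]
          rw [hk']
          exact Submodule.smul_mem _ _ (Submodule.subset_span rfl)
      have hrange : Set.range ![(1 : H), k] = {(1 : H), k} := by
        simp [Matrix.range_cons, Matrix.range_empty, Set.pair_comm]
      have hspan : Submodule.span F {(1 : H), k} = K := by
        apply Submodule.eq_of_le_of_finrank_le hle
        rw [hK]
        have hc := finrank_span_eq_card li
        rw [hrange] at hc
        rw [hc]; simp
      intro x hx
      rw [← hspan] at hx
      rcases Submodule.mem_span_pair.mp hx with ⟨a, b, hab⟩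
      have hkk : k * k ∈ K := hspan ▸ sq_mem_span hcenter hdim k
      constructor
      · have he : k * x = a • k + b • (k * k) := by
          rw [← hab, mul_add, mul_smul_comm, mul_smul_comm, mul_one]
        rw [he]
        exact K.add_mem (K.smul_mem _ hk) (K.smul_mem _ hkk)
      · have he : x * k = a • k + b • (k * k) := by
          rw [← hab, add_mul, smul_mul_assoc, smul_mul_assoc, one_mul]
        rw [he]
        exact K.add_mem (K.smul_mem _ hk) (K.smul_mem _ hkk)
  constructor
  · apply Submodule.eq_of_le_of_finrank_le
    · rintro z hz
      rcases Submodule.mem_map.mp hz with ⟨x, hx, rfl⟩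
      simpa using (key x hx).1
    · rw [finrank_map_eq_of_inj _ (mulLeft_injective hk0)]
  · apply Submodule.eq_of_le_of_finrank_le
    · rintro z hz
      rcases Submodule.mem_map.mp hz with ⟨x, hx, rfl⟩
      simpa using (key x hx).2
    · rw [finrank_map_eq_of_inj _ (mulRight_injective hk0)]


lemma coe_map_mulLeft (g : H) (p : Submodule F H) :
    ((p.map (LinearMap.mulLeft F g) : Submodule F H) : Set H) = (fun m => g * m) '' (p : Set H) := by
  rw [Submodule.map_coe]
  congr 1

lemma coe_map_mulRight (g : H) (p : Submodule F H) :
    ((p.map (LinearMap.mulRight F g) : Submodule F H) : Set H) = (fun m => m * g) '' (p : Set H) := by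
  rw [Submodule.map_coe]
  congr 1

lemma leftPar_iff (M N : Submodule F H) :
    LeftPar F H M N ↔ ∃ g : H, g ≠ 0 ∧ N = M.map (LinearMap.mulLeft F g) := by
  constructor
  · rintro ⟨g, hg, h⟩
    exact ⟨g, hg, SetLike.coe_injective (by rw [coe_map_mulLeft, h])⟩
  · rintro ⟨g, hg, rfl⟩
    exact ⟨g, hg, coe_map_mulLeft g M⟩

lemma rightPar_iff (M N : Submodule F H) :
    RightPar F H M N ↔ ∃ g : H, g ≠ 0 ∧ N = M.map (LinearMap.mulRight F g) := by
  constructor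
  · rintro ⟨g, hg, h⟩
    exact ⟨g, hg, SetLike.coe_injective (by rw [coe_map_mulRight, h])⟩
  · rintro ⟨g, hg, rfl⟩
    exact ⟨g, hg, coe_map_mulRight g M⟩

lemma left_isPar (hcenter : CenterEqF F H) (hdim : Module.finrank F H = 4) :
    IsParallelism F H (fun M N : Line F H => LeftPar F H M.1 N.1) := by
  haveI : FiniteDimensional F H := FiniteDimensional.of_finrank_eq_succ hdim
  constructor
  · constructor
    · intro M
      refine ⟨1, one_ne_zero, ?_⟩
      rw [show (fun m : H => 1 * m) = id from funext fun m => one_mul m, Set.image_id]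
    · rintro M N ⟨g, hg, h⟩
      refine ⟨g⁻¹, inv_ne_zero hg, ?_⟩
      rw [h, Set.image_image]
      simp [inv_mul_cancel_left₀ hg]
    · rintro M N P ⟨g, hg, hN⟩ ⟨g', hg', hP⟩
      refine ⟨g' * g, mul_ne_zero hg' hg, ?_⟩
      rw [hP, hN, Set.image_image]
      simp [mul_assoc]
  · intro x hx M
    have hM2 : Module.finrank F M.1 = 2 := M.2
    have hMbot : M.1 ≠ ⊥ := by
      intro h
      rw [h, finrank_bot] at hM2
      exact two_ne_zero hM2.symm
    obtain ⟨m, hm, hm0⟩ := (Submodule.ne_bot_iff M.1).mp hMbot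
    have hg0 : x * m⁻¹ ≠ 0 := mul_ne_zero hx (inv_ne_zero hm0)
    refine ⟨⟨M.1.map (LinearMap.mulLeft F (x * m⁻¹)), ?_⟩, ⟨?_, ?_⟩, ?_⟩
    · rw [finrank_map_eq_of_inj _ (mulLeft_injective hg0), hM2]
    · exact Submodule.mem_map.mpr ⟨m, hm, by simp [inv_mul_cancel₀ hm0]⟩
    · exact (leftPar_iff _ _).mpr ⟨(x * m⁻¹)⁻¹, inv_ne_zero hg0, (map_mulLeft_cancel hg0 M.1).symm⟩
    · rintro N' ⟨hxN', hpar⟩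
      rcases (leftPar_iff N'.1 M.1).mp hpar with ⟨g', hg', hM⟩
      apply Subtype.ext
      have hN' : N'.1 = M.1.map (LinearMap.mulLeft F g'⁻¹) := by
        rw [hM, map_mulLeft_cancel hg']
      set m' : H := g' * x with hm'def
      have hm' : m' ∈ M.1 := by
        rw [hM]
        exact Submodule.mem_map.mpr ⟨x, hxN', rfl⟩
      have hm'0 : m' ≠ 0 := mul_ne_zero hg' hx
      have hginv : g'⁻¹ = x * m'⁻¹ := by
        rw [hm'def, mul_inv_rev, ← mul_assoc, mul_inv_cancel₀ hx, one_mul]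
      set K := M.1.map (LinearMap.mulLeft F m⁻¹) with hKdef
      have hK2 : Module.finrank F K = 2 := by
        rw [hKdef, finrank_map_eq_of_inj _ (mulLeft_injective (inv_ne_zero hm0)), hM2]
      have h1K : (1 : H) ∈ K :=
        Submodule.mem_map.mpr ⟨m, hm, by simp [inv_mul_cancel₀ hm0]⟩
      have hkK : m⁻¹ * m' ∈ K := Submodule.mem_map.mpr ⟨m', hm', rfl⟩
      have hk0 : m⁻¹ * m' ≠ 0 := mul_ne_zero (inv_ne_zero hm0) hm'0
      have hmapk := (map_line_self hcenter hdim hK2 h1K hkK hk0).1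
      have hinvk : K.map (LinearMap.mulLeft F (m⁻¹ * m')⁻¹) = K := by
        conv_lhs => rw [← hmapk]
        exact map_mulLeft_cancel hk0 K
      have hMK : M.1 = K.map (LinearMap.mulLeft F m) := by
        rw [hKdef, map_mulLeft_map_mulLeft, mul_inv_cancel₀ hm0, LinearMap.mulLeft_one,
          Submodule.map_id]
      have hkey : M.1.map (LinearMap.mulLeft F m'⁻¹) = K := by
        conv_lhs => rw [hMK]
        rw [map_mulLeft_map_mulLeft]
        have he : (m⁻¹ * m')⁻¹ = m'⁻¹ * m := by rw [mul_inv_rev, inv_inv]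
        rw [← he, hinvk]
      show N'.1 = M.1.map (LinearMap.mulLeft F (x * m⁻¹))
      rw [hN', hginv, ← map_mulLeft_map_mulLeft x m'⁻¹, hkey,
        ← map_mulLeft_map_mulLeft x m⁻¹, ← hKdef]

lemma right_isPar (hcenter : CenterEqF F H) (hdim : Module.finrank F H = 4) :
    IsParallelism F H (fun M N : Line F H => RightPar F H M.1 N.1) := by
  haveI : FiniteDimensional F H := FiniteDimensional.of_finrank_eq_succ hdim
  constructor
  · constructor
    · intro M
      refine ⟨1, one_ne_zero, ?_⟩
      rw [show (fun m : H => m * 1) = id from funext fun m => mul_one m, Set.image_id]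
    · rintro M N ⟨g, hg, h⟩
      refine ⟨g⁻¹, inv_ne_zero hg, ?_⟩
      rw [h, Set.image_image]
      simp [mul_inv_cancel_right₀ hg]
    · rintro M N P ⟨g, hg, hN⟩ ⟨g', hg', hP⟩
      refine ⟨g * g', mul_ne_zero hg hg', ?_⟩
      rw [hP, hN, Set.image_image]
      simp [mul_assoc]
  · intro x hx M
    have hM2 : Module.finrank F M.1 = 2 := M.2
    have hMbot : M.1 ≠ ⊥ := by
      intro h
      rw [h, finrank_bot] at hM2
      exact two_ne_zero hM2.symm
    obtain ⟨m, hm, hm0⟩ := (Submodule.ne_bot_iff M.1).mp hMbot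
    have hg0 : m⁻¹ * x ≠ 0 := mul_ne_zero (inv_ne_zero hm0) hx
    refine ⟨⟨M.1.map (LinearMap.mulRight F (m⁻¹ * x)), ?_⟩, ⟨?_, ?_⟩, ?_⟩
    · rw [finrank_map_eq_of_inj _ (mulRight_injective hg0), hM2]
    · exact Submodule.mem_map.mpr ⟨m, hm, by simp [mul_inv_cancel₀ hm0]⟩
    · exact (rightPar_iff _ _).mpr ⟨(m⁻¹ * x)⁻¹, inv_ne_zero hg0, (map_mulRight_cancel hg0 M.1).symm⟩
    · rintro N' ⟨hxN', hpar⟩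
      rcases (rightPar_iff N'.1 M.1).mp hpar with ⟨g', hg', hM⟩
      apply Subtype.ext
      have hN' : N'.1 = M.1.map (LinearMap.mulRight F g'⁻¹) := by
        rw [hM, map_mulRight_cancel hg']
      set m' : H := x * g' with hm'def
      have hm' : m' ∈ M.1 := by
        rw [hM]
        exact Submodule.mem_map.mpr ⟨x, hxN', rfl⟩
      have hm'0 : m' ≠ 0 := mul_ne_zero hx hg'
      have hginv : g'⁻¹ = m'⁻¹ * x := by
        rw [hm'def, mul_inv_rev, mul_assoc, inv_mul_cancel₀ hx, mul_one]
      set K := M.1.map (LinearMap.mulRight F m⁻¹) with hKdef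
      have hK2 : Module.finrank F K = 2 := by
        rw [hKdef, finrank_map_eq_of_inj _ (mulRight_injective (inv_ne_zero hm0)), hM2]
      have h1K : (1 : H) ∈ K :=
        Submodule.mem_map.mpr ⟨m, hm, by simp [mul_inv_cancel₀ hm0]⟩
      have hkK : m' * m⁻¹ ∈ K := Submodule.mem_map.mpr ⟨m', hm', rfl⟩
      have hk0 : m' * m⁻¹ ≠ 0 := mul_ne_zero hm'0 (inv_ne_zero hm0)
      have hmapk := (map_line_self hcenter hdim hK2 h1K hkK hk0).2
      have hinvk : K.map (LinearMap.mulRight F (m' * m⁻¹)⁻¹) = K := by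
        conv_lhs => rw [← hmapk]
        exact map_mulRight_cancel hk0 K
      have hMK : M.1 = K.map (LinearMap.mulRight F m) := by
        rw [hKdef, map_mulRight_map_mulRight, inv_mul_cancel₀ hm0, LinearMap.mulRight_one,
          Submodule.map_id]
      have hkey : M.1.map (LinearMap.mulRight F m'⁻¹) = K := by
        conv_lhs => rw [hMK]
        rw [map_mulRight_map_mulRight]
        have he : (m' * m⁻¹)⁻¹ = m * m'⁻¹ := by rw [mul_inv_rev, inv_inv]
        rw [← he, hinvk]
      show N'.1 = M.1.map (LinearMap.mulRight F (m⁻¹ * x))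
      rw [hN', hginv, ← map_mulRight_map_mulRight m'⁻¹ x, hkey,
        ← map_mulRight_map_mulRight m⁻¹ x, ← hKdef]

end ParAux

/-- The left parallelism `∥ℓ` and the right parallelism `∥r` are parallelisms:
equivalence relations on the set of lines such that through every nonzero point
there is exactly one line of each parallel class. -/
theorem leftPar_rightPar_isParallelism
    (hcenter : CenterEqF F H) (hdim : Module.finrank F H = 4) :
    IsParallelism F H (fun M N : Line F H => LeftPar F H M.1 N.1) ∧
    IsParallelism F H (fun M N : Line F H => RightPar F H M.1 N.1) :=
  ⟨ParAux.left_isPar hcenter hdim, ParAux.right_isPar hcenter hdim⟩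
end

section
/- Let ∥ be a Clifford-like parallelism and let α be a ring automorphism of H. Then α preserves ∥ if and only if α(ℱ) = ℱ. -/
variable (F H : Type*) [Field F] [DivisionRing H] [Algebra F H]

/-!
Since `α` maps the centre `F·1` onto itself, it is semilinear and so induces a permutation `Φ`
of the lines, `Φ(M) = α(M)`. As `α(g·M) = α(g)·α(M)` and `α(M·g) = α(M)·α(g)`, `Φ` preserves
`∥ℓ` and `∥r`, and it fixes the star `𝒜`. Every `∥`-class contains a line `L ∈ 𝒜`, and that
class is `Sℓ(L)` if `L ∈ ℱ` and `Sr(L)` otherwise. So if `Φ(ℱ) = ℱ`, then `Φ` maps the class of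
`L` into the class of `Φ(L)`, which is of the same kind; conversely, if `Φ` preserves `∥`, then
`S(Φ L) = Φ(S(L))` is a left class exactly when `S(L)` is.
-/

theorem Submodule.finrank_map_linearEquiv {R R₂ M M₂ : Type*} [Ring R] [Ring R₂]
    [AddCommGroup M] [AddCommGroup M₂] [Module R M] [Module R₂ M₂]
    {σ : R →+* R₂} {σ' : R₂ →+* R} [RingHomInvPair σ σ'] [RingHomInvPair σ' σ]
    (e : M ≃ₛₗ[σ] M₂) (p : Submodule R M) :
    Module.finrank R₂ (p.map (e : M →ₛₗ[σ] M₂)) = Module.finrank R p := by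
  have hσ : Function.Bijective σ :=
    ⟨Function.LeftInverse.injective (g := σ') fun _ => RingHomInvPair.comp_apply_eq, σ.surjective⟩
  simpa [Module.finrank] using congrArg Cardinal.toNat (lift_rank_eq_of_equiv_equiv σ
    (e.submoduleMap p).toAddEquiv hσ fun r m => (e.submoduleMap p).map_smulₛₗ r m).symm

section

variable {F H}

theorem RingEquiv.exists_map_algebraMap_eq (hcenter : CenterEqF F H) (α : H ≃+* H) (a : F) :
    ∃ b : F, α (algebraMap F H a) = algebraMap F H b :=
  (hcenter _).1 fun x => by simpa using congrArg α (Algebra.commutes a (α.symm x))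

theorem RingEquiv.exists_map_smul (hcenter : CenterEqF F H) (α : H ≃+* H) :
    ∃ σ : F ≃+* F, ∀ (a : F) (x : H), α (a • x) = σ a • α x := by
  choose f hf using α.exists_map_algebraMap_eq hcenter
  have hinj := (algebraMap F H).injective
  let τ : F →+* F :=
    { toFun := f
      map_one' := hinj <| by rw [← hf, map_one, map_one]
      map_mul' := fun a b => hinj <| by simp only [map_mul, ← hf]
      map_zero' := hinj <| by rw [← hf, map_zero, map_zero]
      map_add' := fun a b => hinj <| by simp only [map_add, ← hf] }
  have hτ : Function.Surjective τ := fun b => by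
    obtain ⟨c, hc⟩ := α.symm.exists_map_algebraMap_eq hcenter b
    exact ⟨c, hinj <| by simp [τ, ← hf, ← hc]⟩
  exact ⟨.ofBijective τ ⟨τ.injective, hτ⟩, fun a x => by
    rw [Algebra.smul_def, Algebra.smul_def, map_mul, hf]; rfl⟩

theorem RingEquiv.exists_lineEquiv (hcenter : CenterEqF F H) (α : H ≃+* H) :
    ∃ Φ : Line F H ≃ Line F H, ∀ M, ((Φ M).1 : Set H) = α '' M.1 := by
  obtain ⟨σ, hσ⟩ := α.exists_map_smul hcenter
  let _ := RingHomInvPair.of_ringEquiv σ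
  let _ := RingHomInvPair.of_ringEquiv_symm σ
  let e : H ≃ₛₗ[(σ : F →+* F)] H := { α.toAddEquiv with map_smul' := hσ }
  refine ⟨(Submodule.orderIsoMapComap e).toEquiv.subtypeEquiv fun M => ?_, fun M => rfl⟩
  rw [RelIso.coe_fn_toEquiv, Submodule.orderIsoMapComap_apply, Submodule.finrank_map_linearEquiv]

theorem leftPar_iff_of_image (α : H ≃+* H) {M N M' N' : Submodule F H}
    (hM : (M' : Set H) = α '' M) (hN : (N' : Set H) = α '' N) :
    LeftPar F H M' N' ↔ LeftPar F H M N := by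
  have hmul : ∀ g, (α g * ·) '' (α '' M) = α '' ((g * ·) '' M) := fun g => by
    simp only [Set.image_image, map_mul]
  rw [LeftPar, hM, hN, α.surjective.exists]
  simp only [hmul, (Set.image_injective.2 α.injective).eq_iff, map_ne_zero_iff _ α.injective,
    LeftPar]

theorem rightPar_iff_of_image (α : H ≃+* H) {M N M' N' : Submodule F H}
    (hM : (M' : Set H) = α '' M) (hN : (N' : Set H) = α '' N) :
    RightPar F H M' N' ↔ RightPar F H M N := by
  have hmul : ∀ g, (· * α g) '' (α '' M) = α '' ((· * g) '' M) := fun g => by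
    simp only [Set.image_image, map_mul]
  rw [RightPar, hM, hN, α.surjective.exists]
  simp only [hmul, (Set.image_injective.2 α.injective).eq_iff, map_ne_zero_iff _ α.injective,
    RightPar]

structure PreservesLeftRightStar (Φ : Line F H ≃ Line F H) : Prop where
  leftPar_iff : ∀ M N : Line F H, LeftPar F H (Φ M).1 (Φ N).1 ↔ LeftPar F H M.1 N.1
  rightPar_iff : ∀ M N : Line F H, RightPar F H (Φ M).1 (Φ N).1 ↔ RightPar F H M.1 N.1
  one_mem_iff : ∀ M : Line F H, (1 : H) ∈ (Φ M).1 ↔ (1 : H) ∈ M.1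

theorem RingEquiv.preservesLeftRightStar (α : H ≃+* H) {Φ : Line F H ≃ Line F H}
    (hΦ : ∀ M, ((Φ M).1 : Set H) = α '' M.1) : PreservesLeftRightStar Φ where
  leftPar_iff M N := leftPar_iff_of_image α (hΦ M) (hΦ N)
  rightPar_iff M N := rightPar_iff_of_image α (hΦ M) (hΦ N)
  one_mem_iff M := by rw [← SetLike.mem_coe, hΦ]; simp

theorem preserves_iff_of_lineEquiv {α : H → H} {Φ : Line F H ≃ Line F H}
    (hΦ : ∀ M, ((Φ M).1 : Set H) = α '' M.1) (par : Line F H → Line F H → Prop) :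
    Preserves F H α par ↔ ∀ M N, par (Φ M) (Φ N) ↔ par M N := by
  have hline : ∀ M M' : Line F H, (M'.1 : Set H) = α '' M.1 ↔ M' = Φ M := fun M M' => by
    rw [← hΦ, SetLike.coe_set_eq, ← Subtype.ext_iff]
  refine ⟨fun h M N => (h M N _ _ (hΦ M) (hΦ N)).symm, fun h M N M' N' hM hN => ?_⟩
  rw [hline] at hM hN
  subst hM hN
  exact (h M N).symm

theorem imageLines_eq_image {α : H → H} {Φ : Line F H ≃ Line F H}
    (hΦ : ∀ M, ((Φ M).1 : Set H) = α '' M.1) (G : Set (Line F H)) :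
    imageLines F H α G = Φ '' G := by
  have hline : ∀ M M' : Line F H, (M'.1 : Set H) = α '' M.1 ↔ Φ M = M' := fun M M' => by
    rw [← hΦ, SetLike.coe_set_eq, ← Subtype.ext_iff, eq_comm]
  ext L'
  exact exists_congr fun L => and_congr_right fun _ => hline L L'

theorem parClass_eq_rightClass {par : Line F H → Line F H → Prop}
    (hpar : IsCliffordLike F H par) {L : Line F H} (h1 : (1 : H) ∈ L.1) (hL : L ∉ calF F H par) :
    parClass F H par L = rightClass F H L :=
  (hpar.2 L).resolve_left fun h => hL ⟨h1, h⟩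

namespace PreservesLeftRightStar

variable {Φ : Line F H ≃ Line F H} {par : Line F H → Line F H → Prop}

theorem symm (hΦ : PreservesLeftRightStar Φ) : PreservesLeftRightStar Φ.symm where
  leftPar_iff M N := by simpa using (hΦ.leftPar_iff (Φ.symm M) (Φ.symm N)).symm
  rightPar_iff M N := by simpa using (hΦ.rightPar_iff (Φ.symm M) (Φ.symm N)).symm
  one_mem_iff M := by simpa using (hΦ.one_mem_iff (Φ.symm M)).symm

theorem map_mem_calF_iff (hΦ : PreservesLeftRightStar Φ)
    (hp : ∀ M N, par (Φ M) (Φ N) ↔ par M N) (L : Line F H) :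
    Φ L ∈ calF F H par ↔ L ∈ calF F H par := by
  refine and_congr (hΦ.one_mem_iff L) ?_
  rw [Set.ext_iff, Set.ext_iff, ← Φ.forall_congr_right]
  exact forall_congr' fun N => iff_congr (hp N L) (hΦ.leftPar_iff N L)

theorem par_map_of_one_mem (hΦ : PreservesLeftRightStar Φ) (hpar : IsCliffordLike F H par)
    {L M : Line F H} (h1 : (1 : H) ∈ L.1) (hF : Φ L ∈ calF F H par ↔ L ∈ calF F H par)
    (h : par M L) : par (Φ M) (Φ L) := by
  by_cases hL : L ∈ calF F H par
  · have hM : M ∈ leftClass F H L := hL.2 ▸ h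
    show Φ M ∈ parClass F H par (Φ L)
    rw [(hF.2 hL).2]
    exact (hΦ.leftPar_iff M L).2 hM
  · have hM : M ∈ rightClass F H L := parClass_eq_rightClass hpar h1 hL ▸ h
    show Φ M ∈ parClass F H par (Φ L)
    rw [parClass_eq_rightClass hpar ((hΦ.one_mem_iff L).2 h1) (mt hF.1 hL)]
    exact (hΦ.rightPar_iff M L).2 hM

theorem par_map (hΦ : PreservesLeftRightStar Φ) (hpar : IsCliffordLike F H par)
    (hF : ∀ L, Φ L ∈ calF F H par ↔ L ∈ calF F H par)
    {M N : Line F H} (h : par M N) : par (Φ M) (Φ N) := by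
  have hequiv := hpar.1.1
  obtain ⟨L, ⟨h1, hLM⟩, -⟩ := hpar.1.2 1 one_ne_zero M
  have hM := hΦ.par_map_of_one_mem hpar h1 (hF L) (hequiv.symm hLM)
  have hN := hΦ.par_map_of_one_mem hpar h1 (hF L) (hequiv.trans (hequiv.symm h) (hequiv.symm hLM))
  exact hequiv.trans hM (hequiv.symm hN)

theorem par_iff_image_calF (hΦ : PreservesLeftRightStar Φ) (hpar : IsCliffordLike F H par) :
    (∀ M N, par (Φ M) (Φ N) ↔ par M N) ↔ Φ '' calF F H par = calF F H par := by
  constructor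
  · intro hp
    ext L
    simpa [Φ.image_eq_preimage_symm] using (hΦ.map_mem_calF_iff hp (Φ.symm L)).symm
  · intro hF
    have hΦF : ∀ L, Φ L ∈ calF F H par ↔ L ∈ calF F H par := fun L => by
      conv_lhs => rw [← hF]
      exact Φ.injective.mem_set_image
    have hΦF' : ∀ L, Φ.symm L ∈ calF F H par ↔ L ∈ calF F H par := fun L => by
      simpa using (hΦF (Φ.symm L)).symm
    exact fun M N => ⟨fun h => by simpa using hΦ.symm.par_map hpar hΦF' h, hΦ.par_map hpar hΦF⟩

end PreservesLeftRightStar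

end

theorem ringAut_preserves_iff
    (hcenter : CenterEqF F H)
    (par : Line F H → Line F H → Prop) (hpar : IsCliffordLike F H par)
    (α : H ≃+* H) :
    Preserves F H (⇑α) par ↔
      imageLines F H (⇑α) (calF F H par) = calF F H par := by
  obtain ⟨Φ, hΦ⟩ := α.exists_lineEquiv hcenter
  rw [preserves_iff_of_lineEquiv hΦ, imageLines_eq_image hΦ]
  exact (α.preservesLeftRightStar hΦ).par_iff_image_calF hpar
end

section
/- Let ∥ be a Clifford-like parallelism and let α : H → H be a ring antiautomorphism of H, i.e., an additive bijection with α(1) = 1 and α(x·y) = α(y)·α(x) for all x, y ∈ H. Then α preserves ∥ if and only if α(ℱ) = 𝒜 \ ℱ. -/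
variable (F H : Type*) [Field F] [DivisionRing H] [Algebra F H]

/-!
An antiautomorphism `α` maps the centre `F` onto itself, so it is semilinear and induces a
bijection `φ` of the set of lines; since `α(g·M) = α(M)·α(g)`, `φ` carries left parallel classes
to right ones and vice versa. In a quaternion skew field no line `L ∋ 1` has `Sℓ(L) = Sr(L)`:
otherwise `L = F[u]` would be normalised by every `g ≠ 0`, so `g u g⁻¹` would always be one of
the two roots `u`, `t - u` of the equation `x² = s + t x` satisfied by `u`, which forces `u` to
be central. Consequently, for `L ∈ 𝒜`, `φ` maps the `∥`-class of `L` onto that of `φ L` exactly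
when `L ∈ ℱ ↔ φ L ∉ ℱ`. Every `∥`-class contains a line of `𝒜`, so `α` preserves `∥` iff this
holds for all `L ∈ 𝒜`, i.e. iff `φ(ℱ) = 𝒜 \ ℱ`.
-/

open Module Function

theorem Submodule.finrank_map_of_injective {R R' M M' : Type*} [Ring R] [Ring R']
    [AddCommGroup M] [AddCommGroup M'] [Module R M] [Module R' M'] (σ : R ≃+* R')
    (f : M →ₛₗ[(σ : R →+* R')] M') (hf : Injective f) (p : Submodule R M) :
    finrank R' (p.map f) = finrank R p := by
  let := RingHomInvPair.of_ringEquiv σ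
  let := RingHomInvPair.of_ringEquiv_symm σ
  let e := Submodule.equivMapOfInjective f hf p
  have := lift_rank_eq_of_equiv_equiv σ e.toAddEquiv σ.bijective e.map_smulₛₗ
  simpa [finrank] using congrArg Cardinal.toNat this.symm

section Semilinear

variable {F H : Type*} [Field F] [DivisionRing H] [Algebra F H] {β : H → H}

namespace IsSemilinear

theorem exists_line_eq_image (hβ : IsSemilinear F H β) (L : Line F H) :
    ∃ L' : Line F H, (L'.1 : Set H) = β '' L.1 := by
  obtain ⟨hbij, hadd, σ, hσ⟩ := hβ
  let f : H →ₛₗ[(σ : F →+* F)] H := { toFun := β, map_add' := hadd, map_smul' := hσ }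
  exact ⟨⟨L.1.map f, (L.1.finrank_map_of_injective σ f hbij.1).trans L.2⟩,
    L.1.map_coe f⟩

noncomputable def lineMap (hβ : IsSemilinear F H β) (L : Line F H) : Line F H :=
  (hβ.exists_line_eq_image L).choose

theorem lineMap_eq_iff (hβ : IsSemilinear F H β) {L M : Line F H} :
    hβ.lineMap L = M ↔ (M.1 : Set H) = β '' L.1 := by
  have hL := (hβ.exists_line_eq_image L).choose_spec
  refine ⟨?_, fun hM => Subtype.ext (SetLike.coe_injective (hL.trans hM.symm))⟩
  rintro rfl
  exact hL

theorem coe_lineMap (hβ : IsSemilinear F H β) (L : Line F H) :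
    ((hβ.lineMap L).1 : Set H) = β '' L.1 :=
  hβ.lineMap_eq_iff.1 rfl

theorem symm (hβ : IsSemilinear F H β) : IsSemilinear F H (Equiv.ofBijective β hβ.1).symm := by
  obtain ⟨hbij, hadd, σ, hσ⟩ := hβ
  set e := Equiv.ofBijective β hbij
  refine ⟨e.symm.bijective, fun x y => e.injective ?_, σ.symm, fun a x => e.injective ?_⟩
  · simp only [e, Equiv.apply_symm_apply, Equiv.ofBijective_apply, hadd,
      Equiv.ofBijective_apply_symm_apply]
  · simp only [e, Equiv.apply_symm_apply, Equiv.ofBijective_apply, hσ,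
      Equiv.ofBijective_apply_symm_apply, RingEquiv.apply_symm_apply]

theorem lineMap_bijective (hβ : IsSemilinear F H β) : Bijective hβ.lineMap := by
  refine ⟨fun L M h => Subtype.ext (SetLike.coe_injective (Set.image_injective.2 hβ.1.1 ?_)),
    fun M => ⟨hβ.symm.lineMap M, ?_⟩⟩
  · rw [← hβ.coe_lineMap, ← hβ.coe_lineMap, h]
  · rw [lineMap_eq_iff, coe_lineMap, Set.image_image]
    simp only [Equiv.ofBijective_apply_symm_apply, Set.image_id']

theorem preserves_iff (hβ : IsSemilinear F H β) (par : Line F H → Line F H → Prop) :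
    Preserves F H β par ↔ ∀ M N, par M N ↔ par (hβ.lineMap M) (hβ.lineMap N) := by
  refine ⟨fun h M N => h M N _ _ (hβ.coe_lineMap M) (hβ.coe_lineMap N), fun h M N M' N' hM hN => ?_⟩
  rw [← hβ.lineMap_eq_iff.2 hM, ← hβ.lineMap_eq_iff.2 hN]
  exact h M N

theorem imageLines_eq (hβ : IsSemilinear F H β) (G : Set (Line F H)) :
    imageLines F H β G = hβ.lineMap '' G := by
  ext L'
  simp only [imageLines, Set.mem_ofPred_eq, Set.mem_image, hβ.lineMap_eq_iff]

theorem lineMap_mem_starLines_iff (hβ : IsSemilinear F H β) (h1 : β 1 = 1) (L : Line F H) :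
    hβ.lineMap L ∈ starLines F H ↔ L ∈ starLines F H := by
  change (1 : H) ∈ ((hβ.lineMap L).1 : Set H) ↔ (1 : H) ∈ (L.1 : Set H)
  rw [coe_lineMap, ← hβ.1.1.mem_set_image (a := 1) (s := L.1), h1]

end IsSemilinear

theorem isSemilinear_mul_left {g : H} (hg : g ≠ 0) : IsSemilinear F H (g * ·) :=
  ⟨mulLeft_bijective₀ g hg, mul_add g, RingEquiv.refl F, fun a x => mul_smul_comm a g x⟩

end Semilinear

namespace IsRingAntiAutFn

variable {F H : Type*} [Field F] [DivisionRing H] [Algebra F H] {α : H → H}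

theorem map_zero (hα : IsRingAntiAutFn H α) : α 0 = 0 := by
  simpa using hα.2.1 0 0

theorem map_central_iff (hα : IsRingAntiAutFn H α) (z : H) :
    (∀ y, α z * y = y * α z) ↔ ∀ y, z * y = y * z := by
  obtain ⟨hbij, -, -, hmul⟩ := hα
  refine ⟨fun h y => hbij.1 ?_, fun h y => ?_⟩
  · rw [hmul, hmul, h]
  · obtain ⟨x, rfl⟩ := hbij.2 y
    rw [← hmul, ← hmul, h]

theorem exists_ringEquiv_map_algebraMap (hα : IsRingAntiAutFn H α) (hcenter : CenterEqF F H) :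
    ∃ σ : F ≃+* F, ∀ a, α (algebraMap F H a) = algebraMap F H (σ a) := by
  choose f hf using fun a : F =>
    (hcenter _).1 ((hα.map_central_iff _).2 fun y => Algebra.commutes a y)
  have hinj := (algebraMap F H).injective
  have ⟨hbij, hadd, h1, hmul⟩ := hα
  let σ : F →+* F :=
    { toFun := f
      map_one' := hinj (by rw [← hf, map_one, h1])
      map_mul' := fun a b => hinj (by
        rw [map_mul, ← hf, ← hf, ← hf, map_mul, hmul, hf, hf]
        exact Algebra.commutes _ _)
      map_zero' := hinj (by rw [← hf, _root_.map_zero, hα.map_zero])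
      map_add' := fun a b => hinj (by rw [map_add, ← hf, ← hf, ← hf, map_add, hadd]) }
  refine ⟨RingEquiv.ofBijective σ ⟨σ.injective, fun b => ?_⟩, hf⟩
  obtain ⟨z, hz⟩ := hbij.2 (algebraMap F H b)
  obtain ⟨a, rfl⟩ := (hcenter z).1 ((hα.map_central_iff z).1
    (by rw [hz]; exact fun y => Algebra.commutes b y))
  exact ⟨a, hinj ((hf a).symm.trans hz)⟩

theorem isSemilinear (hα : IsRingAntiAutFn H α) (hcenter : CenterEqF F H) : IsSemilinear F H α := by
  obtain ⟨σ, hσ⟩ := hα.exists_ringEquiv_map_algebraMap hcenter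
  refine ⟨hα.1, hα.2.1, σ, fun a x => ?_⟩
  rw [Algebra.smul_def, hα.2.2.2, hσ, Algebra.smul_def, Algebra.commutes]

theorem exists_image_eq_image_iff (hα : IsRingAntiAutFn H α) {f f' : H → H → H}
    (hf : ∀ g x, α (f g x) = f' (α g) (α x)) (s t : Set H) :
    (∃ h, h ≠ 0 ∧ α '' t = f' h '' (α '' s)) ↔ ∃ g, g ≠ 0 ∧ t = f g '' s := by
  constructor
  · rintro ⟨h, hh, heq⟩
    obtain ⟨g, rfl⟩ := hα.1.2 h
    refine ⟨g, by rintro rfl; exact hh hα.map_zero, Set.image_injective.2 hα.1.1 ?_⟩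
    simp only [heq, Set.image_image, hf]
  · rintro ⟨g, hg, rfl⟩
    refine ⟨α g, fun h => hg (hα.1.1 (h.trans hα.map_zero.symm)), ?_⟩
    simp only [Set.image_image, hf]

theorem preimage_rightClass (hα : IsRingAntiAutFn H α) (hs : IsSemilinear F H α)
    (M : Line F H) : hs.lineMap ⁻¹' rightClass F H (hs.lineMap M) = leftClass F H M := by
  ext N
  simp only [Set.mem_preimage, rightClass, leftClass, Set.mem_ofPred_eq, RightPar, LeftPar,
    hs.coe_lineMap]
  exact hα.exists_image_eq_image_iff (f := fun g x => g * x) (f' := fun h y => y * h)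
    (fun g x => hα.2.2.2 g x) _ _

theorem preimage_leftClass (hα : IsRingAntiAutFn H α) (hs : IsSemilinear F H α)
    (M : Line F H) : hs.lineMap ⁻¹' leftClass F H (hs.lineMap M) = rightClass F H M := by
  ext N
  simp only [Set.mem_preimage, rightClass, leftClass, Set.mem_ofPred_eq, RightPar, LeftPar,
    hs.coe_lineMap]
  exact hα.exists_image_eq_image_iff (f := fun g x => x * g) (f' := fun h y => h * y)
    (fun g x => hα.2.2.2 x g) _ _

end IsRingAntiAutFn

section Quaternion

variable {F H : Type*} [Field F] [DivisionRing H] [Algebra F H]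

theorem Subalgebra.two_mul_finrank_le_of_ne_top [FiniteDimensional F H] {K : Subalgebra F H}
    (hK : K ≠ ⊤) : 2 * finrank F K ≤ finrank F H := by
  obtain ⟨v, hv⟩ : ∃ v, v ∉ K := by
    by_contra! h
    exact hK (eq_top_iff.2 fun x _ => h x)
  have hv0 : v ≠ 0 := by
    rintro rfl
    exact hv K.zero_mem
  let Kv := (Subalgebra.toSubmodule K).map (LinearMap.mulRight F v)
  -- `s * v ∈ K` with `0 ≠ s ∈ K` would give `v = s⁻¹ * (s * v) ∈ K`
  have hdisj : Subalgebra.toSubmodule K ⊓ Kv = ⊥ := by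
    rw [Submodule.eq_bot_iff]
    rintro _ ⟨hyK, s, hsK, rfl⟩
    by_contra hy
    have hs : s ≠ 0 := by
      rintro rfl
      exact hy (zero_mul v)
    apply hv
    rw [← inv_mul_cancel_left₀ hs v]
    exact K.mul_mem ((Algebra.IsIntegral.isIntegral s).inv_mem hsK) hyK
  have hKv : finrank F Kv = finrank F K :=
    Submodule.finrank_map_of_injective (RingEquiv.refl F) (LinearMap.mulRight F v)
      (mul_left_injective₀ hv0) _
  have hsum := Submodule.finrank_sup_add_finrank_inf_eq (Subalgebra.toSubmodule K) Kv
  rw [hdisj, _root_.finrank_bot, hKv] at hsum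
  have := Submodule.finrank_le (Subalgebra.toSubmodule K ⊔ Kv)
  simp only [Subalgebra.finrank_toSubmodule] at hsum
  omega

theorem adjoin_singleton_ne_top (hcenter : CenterEqF F H) (hH : 1 < finrank F H) (u : H) :
    Algebra.adjoin F {u} ≠ ⊤ := by
  intro htop
  have hcomm : ∀ x y : H, x * y = y * x := fun x y =>
    Algebra.commute_of_mem_adjoin_singleton_of_commute (htop ▸ Algebra.mem_top)
      (Algebra.commute_of_mem_adjoin_singleton_of_commute (htop ▸ Algebra.mem_top) rfl).symm
  have hbot : (⊥ : Subalgebra F H) = ⊤ :=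
    eq_top_iff.2 fun z _ => Algebra.mem_bot.2 (((hcenter z).1 (hcomm z)).imp fun _ h => h.symm)
  rw [Subalgebra.bot_eq_top_iff_finrank_eq_one] at hbot
  omega

theorem finrank_adjoin_singleton_le_two (hcenter : CenterEqF F H) (hdim : finrank F H = 4)
    (u : H) : finrank F (Algebra.adjoin F {u}) ≤ 2 := by
  have : FiniteDimensional F H := .of_finrank_pos (by omega)
  have := Subalgebra.two_mul_finrank_le_of_ne_top (adjoin_singleton_ne_top hcenter (by omega) u)
  omega

theorem two_le_finrank_span_one_self {u : H} (hu : u ∉ (⊥ : Subalgebra F H)) :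
    2 ≤ finrank F (Submodule.span F {1, u}) := by
  have hlt : Subalgebra.toSubmodule (⊥ : Subalgebra F H) < Submodule.span F {1, u} := by
    refine SetLike.lt_iff_le_and_exists.2 ⟨?_, u, Submodule.subset_span (by simp), hu⟩
    rw [Algebra.toSubmodule_bot, Submodule.one_eq_span]
    exact Submodule.span_mono (by simp)
  have := FiniteDimensional.span_of_finite F (A := {1, u}) (Set.toFinite _)
  have := Submodule.finrank_lt_finrank_of_lt hlt
  rwa [Subalgebra.finrank_toSubmodule, Subalgebra.finrank_bot] at this

theorem span_one_self_eq_adjoin (hcenter : CenterEqF F H) (hdim : finrank F H = 4) {u : H}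
    (hu : u ∉ (⊥ : Subalgebra F H)) :
    Submodule.span F {1, u} = Subalgebra.toSubmodule (Algebra.adjoin F {u}) := by
  have : FiniteDimensional F H := .of_finrank_pos (by omega)
  refine Submodule.eq_of_le_of_finrank_le ?_ ?_
  · rw [Submodule.span_le, Set.insert_subset_iff, Set.singleton_subset_iff]
    exact ⟨(Algebra.adjoin F {u}).one_mem, Algebra.self_mem_adjoin_singleton F u⟩
  · exact (finrank_adjoin_singleton_le_two hcenter hdim u).trans (two_le_finrank_span_one_self hu)

theorem exists_mem_line_not_mem_bot (L : Line F H) : ∃ u ∈ L.1, u ∉ (⊥ : Subalgebra F H) := by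
  by_contra! h
  have hle : L.1 ≤ Subalgebra.toSubmodule ⊥ := h
  rw [Algebra.toSubmodule_bot, Submodule.one_eq_span] at hle
  have := Submodule.finrank_mono hle
  rw [L.2, finrank_span_singleton one_ne_zero] at this
  omega

theorem line_eq_span_one_self {L : Line F H} (h1 : 1 ∈ L.1) {u : H} (hu : u ∈ L.1)
    (hu1 : u ∉ (⊥ : Subalgebra F H)) : L.1 = Submodule.span F {1, u} := by
  have : FiniteDimensional F L.1 := .of_finrank_pos (by rw [L.2]; norm_num)
  refine (Submodule.eq_of_le_of_finrank_le ?_ ?_).symm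
  · rw [Submodule.span_le, Set.insert_subset_iff, Set.singleton_subset_iff]
    exact ⟨h1, hu⟩
  · rw [L.2]
    exact two_le_finrank_span_one_self hu1

-- `L = g L h` and `1 = g l₀ h` give `g l g⁻¹ = g (l l₀) h ∈ L`
theorem conj_mem_of_leftClass_eq_rightClass {L : Line F H} (h1 : 1 ∈ L.1)
    (hmul : ∀ x ∈ L.1, ∀ y ∈ L.1, x * y ∈ L.1) (hLR : leftClass F H L = rightClass F H L)
    {g : H} (hg : g ≠ 0) {l : H} (hl : l ∈ L.1) : g * l * g⁻¹ ∈ L.1 := by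
  have hs := isSemilinear_mul_left (F := F) hg
  have hgL : hs.lineMap L ∈ leftClass F H L := by
    refine ⟨g⁻¹, inv_ne_zero hg, ?_⟩
    rw [hs.coe_lineMap, Set.image_image]
    simp only [inv_mul_cancel_left₀ hg, Set.image_id']
  rw [hLR] at hgL
  obtain ⟨h, -, hLh⟩ := hgL
  rw [hs.coe_lineMap, Set.image_image] at hLh
  obtain ⟨l₀, hl₀, h1'⟩ : (1 : H) ∈ (fun m => g * m * h) '' L.1 := hLh ▸ h1
  have hl₀0 : l₀ ≠ 0 := by
    rintro rfl
    simp at h1'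
  have hh : h = l₀⁻¹ * g⁻¹ := by
    rw [← mul_inv_rev]
    exact (inv_eq_of_mul_eq_one_right h1').symm
  have hmem : g * (l * l₀) * h ∈ (L.1 : Set H) := hLh ▸ ⟨l * l₀, hmul l hl l₀ hl₀, rfl⟩
  rwa [hh, show g * (l * l₀) * (l₀⁻¹ * g⁻¹) = g * l * (l₀ * l₀⁻¹) * g⁻¹ by noncomm_ring,
    mul_inv_cancel₀ hl₀0, mul_one] at hmem

theorem eq_or_eq_sub_of_mul_self_sub_eq {t c u : H} (hcu : c * u = u * c) (hct : c * t = t * c)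
    (hut : u * t = t * u) (h : c * c - t * c = u * u - t * u) : c = u ∨ c = t - u := by
  have hfac : (c - u) * (c + u - t) = 0 := by
    calc (c - u) * (c + u - t) = (c * c - t * c) - (u * u - t * u) + (c * u - u * c)
          + (t * c - c * t) + (u * t - t * u) := by noncomm_ring
      _ = 0 := by rw [h, hcu, hct, hut]; abel
  rcases mul_eq_zero.1 hfac with h0 | h0
  · exact Or.inl (sub_eq_zero.1 h0)
  · exact Or.inr (by rw [← sub_eq_zero, ← h0]; abel)

theorem forall_mul_comm_of_forall_or {R : Type*} [Ring R] {u v : R}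
    (h : ∀ g : R, g * u = u * g ∨ g * u = v * g) (g : R) : g * u = u * g := by
  rcases h g with hg | hg
  · exact hg
  rcases h (g + 1) with hg1 | hg1
  · simpa [add_mul, mul_add] using hg1
  · have huv : u = v := by simpa [add_mul, mul_add, hg] using hg1
    rwa [← huv] at hg

theorem leftClass_ne_rightClass (hcenter : CenterEqF F H) (hdim : finrank F H = 4)
    {L : Line F H} (h1 : 1 ∈ L.1) : leftClass F H L ≠ rightClass F H L := by
  intro hLR
  obtain ⟨u, huL, hu⟩ := exists_mem_line_not_mem_bot L
  have hLu := line_eq_span_one_self h1 huL hu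
  have hLK := hLu.trans (span_one_self_eq_adjoin hcenter hdim hu)
  have hmul : ∀ x ∈ L.1, ∀ y ∈ L.1, x * y ∈ L.1 := by
    rw [hLK]
    exact fun x hx y hy => (Algebra.adjoin F {u}).mul_mem hx hy
  have hcomm : ∀ x ∈ L.1, x * u = u * x := fun x hx =>
    (Algebra.commute_of_mem_adjoin_singleton_of_commute (hLK ▸ hx) rfl).eq.symm
  obtain ⟨p, q, hpq⟩ := Submodule.mem_span_pair.1 (hLu ▸ hmul u huL u huL)
  set t := algebraMap F H q
  have hsq : u * u - t * u = algebraMap F H p := by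
    rw [← hpq, Algebra.smul_def, Algebra.smul_def, mul_one]
    abel
  have hor : ∀ g : H, g * u = u * g ∨ g * u = (t - u) * g := by
    intro g
    rcases eq_or_ne g 0 with rfl | hg
    · simp
    have hc : g * u * g⁻¹ * (g * u * g⁻¹) - t * (g * u * g⁻¹) = u * u - t * u := by
      calc _ = g * u * (g⁻¹ * g) * u * g⁻¹ - g * t * u * g⁻¹ := by
            rw [← Algebra.commutes q g]; noncomm_ring
        _ = g * (u * u - t * u) * g⁻¹ := by rw [inv_mul_cancel₀ hg]; noncomm_ring
        _ = u * u - t * u := by rw [hsq, ← Algebra.commutes p g, mul_inv_cancel_right₀ hg]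
    have hgu : g * u = g * u * g⁻¹ * g := (inv_mul_cancel_right₀ hg _).symm
    rcases eq_or_eq_sub_of_mul_self_sub_eq
      (hcomm _ (conj_mem_of_leftClass_eq_rightClass h1 hmul hLR hg huL))
      (Algebra.commutes q _).symm (Algebra.commutes q u).symm hc with h | h
    · exact Or.inl (by rw [hgu, h])
    · exact Or.inr (by rw [hgu, h])
  apply hu
  obtain ⟨a, rfl⟩ := (hcenter u).1 fun x => (forall_mul_comm_of_forall_or hor x).symm
  exact Algebra.mem_bot.2 ⟨a, rfl⟩

end Quaternion

section CliffordLike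

variable {F H : Type*} [Field F] [DivisionRing H] [Algebra F H]
  {par : Line F H → Line F H → Prop}

theorem mem_calF_iff {L : Line F H} (hL : L ∈ starLines F H) :
    L ∈ calF F H par ↔ parClass F H par L = leftClass F H L :=
  and_iff_right hL

theorem IsParallelism.forall_par_iff_iff_forall_starLines (hpar : IsParallelism F H par)
    (φ : Line F H → Line F H) :
    (∀ M N, par M N ↔ par (φ M) (φ N)) ↔
      ∀ L ∈ starLines F H, φ ⁻¹' parClass F H par (φ L) = parClass F H par L := by
  refine ⟨fun h L _ => Set.ext fun N => (h N L).symm, fun h M N => ?_⟩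
  obtain ⟨L, ⟨hL1, hLN⟩, -⟩ := hpar.2 1 one_ne_zero N
  have hφ : ∀ K, par K L ↔ par (φ K) (φ L) := fun K => (Set.ext_iff.1 (h L hL1) K).symm
  have hφN := (hφ N).1 (hpar.1.symm hLN)
  calc par M N ↔ par M L := ⟨fun h => hpar.1.trans h (hpar.1.symm hLN), fun h => hpar.1.trans h hLN⟩
    _ ↔ par (φ M) (φ L) := hφ M
    _ ↔ par (φ M) (φ N) :=
      ⟨fun h => hpar.1.trans h (hpar.1.symm hφN), fun h => hpar.1.trans h hφN⟩

theorem image_calF_eq_iff (φ : Line F H ≃ Line F H)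
    (hstar : ∀ L, φ L ∈ starLines F H ↔ L ∈ starLines F H) :
    φ '' calF F H par = starLines F H \ calF F H par ↔
      ∀ L ∈ starLines F H, (L ∈ calF F H par ↔ φ L ∉ calF F H par) := by
  rw [Set.ext_iff, φ.surjective.forall]
  simp only [φ.injective.mem_set_image, Set.mem_sdiff, hstar]
  refine forall_congr' fun L => ?_
  by_cases hL : L ∈ starLines F H
  · simp [hL]
  · have hLF : L ∉ calF F H par := fun h => hL h.1
    simp [hL, hLF]

theorem IsCliffordLike.preimage_parClass_eq_iff (hpar : IsCliffordLike F H par)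
    (φ : Line F H → Line F H)
    (hleft : ∀ M, φ ⁻¹' rightClass F H (φ M) = leftClass F H M)
    (hright : ∀ M, φ ⁻¹' leftClass F H (φ M) = rightClass F H M)
    {L : Line F H} (hL : L ∈ starLines F H) (hφL : φ L ∈ starLines F H)
    (hne : leftClass F H L ≠ rightClass F H L)
    (hφne : leftClass F H (φ L) ≠ rightClass F H (φ L)) :
    φ ⁻¹' parClass F H par (φ L) = parClass F H par L ↔
      (L ∈ calF F H par ↔ φ L ∉ calF F H par) := by
  rw [mem_calF_iff hL, mem_calF_iff hφL]
  rcases hpar.2 L with hcl | hcl <;> rcases hpar.2 (φ L) with hφcl | hφcl <;>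
    simp [hcl, hφcl, hleft, hright, hne, hne.symm, hφne.symm]

theorem IsCliffordLike.forall_par_iff_iff_image_calF (hpar : IsCliffordLike F H par)
    (φ : Line F H ≃ Line F H) (hstar : ∀ L, φ L ∈ starLines F H ↔ L ∈ starLines F H)
    (hleft : ∀ M, φ ⁻¹' rightClass F H (φ M) = leftClass F H M)
    (hright : ∀ M, φ ⁻¹' leftClass F H (φ M) = rightClass F H M)
    (hne : ∀ L ∈ starLines F H, leftClass F H L ≠ rightClass F H L) :
    (∀ M N, par M N ↔ par (φ M) (φ N)) ↔
      φ '' calF F H par = starLines F H \ calF F H par := by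
  rw [hpar.1.forall_par_iff_iff_forall_starLines, image_calF_eq_iff φ hstar]
  refine forall₂_congr fun L hL => ?_
  have hφL := (hstar L).2 hL
  exact hpar.preimage_parClass_eq_iff φ hleft hright hL hφL (hne L hL) (hne _ hφL)

end CliffordLike

/-- An antiautomorphism `α` of the quaternion skew field `H` preserves a
Clifford-like parallelism `∥` if and only if `α(ℱ) = 𝒜 \ ℱ`. -/
theorem ringAntiAut_preserves_iff
    (hcenter : CenterEqF F H) (hdim : Module.finrank F H = 4)
    (par : Line F H → Line F H → Prop) (hpar : IsCliffordLike F H par)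
    (α : H → H) (hα : IsRingAntiAutFn H α) :
    Preserves F H α par ↔
      imageLines F H α (calF F H par) = starLines F H \ calF F H par := by
  have hs := hα.isSemilinear hcenter
  rw [hs.preserves_iff, hs.imageLines_eq]
  exact hpar.forall_par_iff_iff_image_calF (Equiv.ofBijective _ hs.lineMap_bijective)
    (hs.lineMap_mem_starLines_iff hα.2.2.1) (hα.preimage_rightClass hs)
    (hα.preimage_leftClass hs) fun _ hL => leftClass_ne_rightClass hcenter hdim hL
end

section
/- Let ∥ be a Clifford-like parallelism. For every h ∈ H with h ≠ 0, the inner automorphism x ↦ h⁻¹·x·h preserves ∥. -/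
variable (F H : Type*) [Field F] [DivisionRing H] [Algebra F H]

/-!
The inner automorphism `x ↦ h⁻¹·x·h` is right multiplication by `h` followed by left
multiplication by `h⁻¹`, so it suffices that one-sided multiplications preserve `∥`.
Left multiplication by `g` moves every line `X` to a left parallel line `g·X` and, commuting with
right multiplications, preserves `∥r`. Let `M ∥ N`. If `S(N)` is a left class, then `g·M` and
`g·N` both lie in it. If it is a right class, then `g·M ∥r g·N`, which settles the case where
`S(g·N)` is a right class; otherwise `N ∥ℓ g·N` gives `N ∥ g·N`, so `S(N) = S(g·N)` is also a
left class, and `g·M ∥ℓ M ∥ℓ g·N`. Right multiplication is the mirror image.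
-/

theorem Equivalence.transfer_of_forall_class_eq_or {L : Type*} {par A B T : L → L → Prop}
    (hpar : Equivalence par) (hA : Equivalence A)
    (hclass : ∀ N, (∀ X, par X N ↔ A X N) ∨ (∀ X, par X N ↔ B X N))
    (hTA : ∀ {X X'}, T X X' → A X X')
    (hTB : ∀ {X Y X' Y'}, T X X' → T Y Y' → B X Y → B X' Y')
    {M N M' N' : L} (hM : T M M') (hN : T N N') (hMN : par M N) : par M' N' := by
  rcases hclass N with hNA | hNB
  · have hM'N : par M' N := (hNA M').2 (hA.trans (hA.symm (hTA hM)) ((hNA M).1 hMN))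
    have hN'N : par N' N := (hNA N').2 (hA.symm (hTA hN))
    exact hpar.trans hM'N (hpar.symm hN'N)
  rcases hclass N' with hN'A | hN'B
  · have hNN' : par N N' := (hN'A N).2 (hTA hN)
    have hMN' : A M N' := (hN'A M).1 (hpar.trans hMN hNN')
    exact (hN'A M').2 (hA.trans (hA.symm (hTA hM)) hMN')
  · exact (hN'B M').2 (hTB hM hN ((hNB M).1 hMN))

section

variable {F H}

theorem leftPar_equivalence : Equivalence (LeftPar F H) where
  refl _ := ⟨1, one_ne_zero, by simp⟩
  symm := fun ⟨g, hg, hN⟩ => ⟨g⁻¹, inv_ne_zero hg, by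
    rw [hN, Set.image_image]; simp [inv_mul_cancel_left₀ hg]⟩
  trans := fun ⟨g, hg, hB⟩ ⟨g', hg', hC⟩ => ⟨g' * g, mul_ne_zero hg' hg, by
    rw [hC, hB, Set.image_image]; simp [mul_assoc]⟩

theorem rightPar_equivalence : Equivalence (RightPar F H) where
  refl _ := ⟨1, one_ne_zero, by simp⟩
  symm := fun ⟨g, hg, hN⟩ => ⟨g⁻¹, inv_ne_zero hg, by
    rw [hN, Set.image_image]; simp [mul_inv_cancel_right₀ hg]⟩
  trans := fun ⟨g, hg, hB⟩ ⟨g', hg', hC⟩ => ⟨g * g', mul_ne_zero hg hg', by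
    rw [hC, hB, Set.image_image]; simp [mul_assoc]⟩

theorem image_mul_left_image_mul_right_comm (g k : H) (S : Set H) :
    (g * ·) '' ((· * k) '' S) = (· * k) '' ((g * ·) '' S) :=
  Set.image_comm fun x => (mul_assoc g x k).symm

variable {par : Line F H → Line F H → Prop}

theorem IsCliffordLike.forall_par_iff (hpar : IsCliffordLike F H par) (N : Line F H) :
    (∀ X, par X N ↔ LeftPar F H X.1 N.1) ∨ (∀ X, par X N ↔ RightPar F H X.1 N.1) :=
  (hpar.2 N).imp Set.ext_iff.1 Set.ext_iff.1

theorem IsCliffordLike.par_of_image_mul_left (hpar : IsCliffordLike F H par) {g : H} (hg : g ≠ 0)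
    {M N M' N' : Line F H} (hM : (M'.1 : Set H) = (g * ·) '' M.1)
    (hN : (N'.1 : Set H) = (g * ·) '' N.1) (hMN : par M N) : par M' N' :=
  hpar.1.1.transfer_of_forall_class_eq_or (leftPar_equivalence.comap Subtype.val)
    hpar.forall_par_iff (T := fun X X' => (X'.1 : Set H) = (g * ·) '' X.1)
    (fun hX => ⟨g, hg, hX⟩)
    (fun hX hY ⟨k, hk, hXY⟩ => ⟨k, hk, by
      rw [hY, hXY, hX, image_mul_left_image_mul_right_comm]⟩)
    hM hN hMN

theorem IsCliffordLike.par_of_image_mul_right (hpar : IsCliffordLike F H par) {g : H} (hg : g ≠ 0)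
    {M N M' N' : Line F H} (hM : (M'.1 : Set H) = (· * g) '' M.1)
    (hN : (N'.1 : Set H) = (· * g) '' N.1) (hMN : par M N) : par M' N' :=
  hpar.1.1.transfer_of_forall_class_eq_or (rightPar_equivalence.comap Subtype.val)
    (fun N => (hpar.forall_par_iff N).symm) (T := fun X X' => (X'.1 : Set H) = (· * g) '' X.1)
    (fun hX => ⟨g, hg, hX⟩)
    (fun hX hY ⟨k, hk, hXY⟩ => ⟨k, hk, by
      rw [hY, hXY, hX, image_mul_left_image_mul_right_comm]⟩)
    hM hN hMN

theorem exists_line_coe_eq_image (f : H →ₗ[F] H) (hf : Function.Injective f) (M : Line F H) :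
    ∃ M' : Line F H, (M'.1 : Set H) = f '' M.1 :=
  ⟨⟨M.1.map f, (Submodule.equivMapOfInjective f hf M.1).finrank_eq.symm.trans M.2⟩,
    Submodule.map_coe f M.1⟩

theorem IsCliffordLike.par_of_image_mul_mul (hpar : IsCliffordLike F H par) {a b : H}
    (ha : a ≠ 0) (hb : b ≠ 0) {M N M' N' : Line F H}
    (hM : (M'.1 : Set H) = (fun x => a * x * b) '' M.1)
    (hN : (N'.1 : Set H) = (fun x => a * x * b) '' N.1) (hMN : par M N) : par M' N' := by
  have hinj : Function.Injective (LinearMap.mulRight F b) := mul_left_injective₀ hb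
  obtain ⟨Mb, hMb⟩ := exists_line_coe_eq_image _ hinj M
  obtain ⟨Nb, hNb⟩ := exists_line_coe_eq_image _ hinj N
  refine hpar.par_of_image_mul_left ha ?_ ?_ (hpar.par_of_image_mul_right hb hMb hNb hMN)
  · rw [hM, hMb, Set.image_image]; simp [mul_assoc]
  · rw [hN, hNb, Set.image_image]; simp [mul_assoc]

end

theorem innerAut_preserves
    (par : Line F H → Line F H → Prop) (hpar : IsCliffordLike F H par)
    (h : H) (hh : h ≠ 0) :
    Preserves F H (fun x => h⁻¹ * x * h) par := by
  have hback (S : Set H) : S = (fun x => h * x * h⁻¹) '' ((fun x => h⁻¹ * x * h) '' S) := by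
    rw [Set.image_image]; simp [mul_assoc, hh]
  intro M N M' N' hM hN
  exact ⟨hpar.par_of_image_mul_mul (inv_ne_zero hh) hh hM hN,
    hpar.par_of_image_mul_mul hh (inv_ne_zero hh) (hM ▸ hback _) (hN ▸ hback _)⟩
end

section
/- Let ∥ be a Clifford-like parallelism. For every g ∈ H with g ≠ 0, the left translation λ_g : x ↦ g·x preserves ∥. -/
variable (F H : Type*) [Field F] [DivisionRing H] [Algebra F H]

lemma image_mul_left_image_mul_left {G : Type*} [Semigroup G] (a b : G) (s : Set G) :
    (a * ·) '' ((b * ·) '' s) = ((a * b) * ·) '' s := by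
  simp only [Set.image_image, mul_assoc]

lemma image_mul_left_image_mul_right {G : Type*} [Semigroup G] (a b : G) (s : Set G) :
    (a * ·) '' ((· * b) '' s) = (· * b) '' ((a * ·) '' s) := by
  simp only [Set.image_image, mul_assoc]

lemma eq_image_inv_mul_of_eq_image_mul {G : Type*} [GroupWithZero G] {g : G} (hg : g ≠ 0)
    {s t : Set G} (h : t = (g * ·) '' s) : s = (g⁻¹ * ·) '' t := by
  rw [h, image_mul_left_image_mul_left, inv_mul_cancel₀ hg]
  simp

section CliffordLike

variable {F H}

lemma LeftPar.symm {M N : Submodule F H} (h : LeftPar F H M N) : LeftPar F H N M := by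
  obtain ⟨g, hg, hMN⟩ := h
  exact ⟨g⁻¹, inv_ne_zero hg, eq_image_inv_mul_of_eq_image_mul hg hMN⟩

lemma LeftPar.trans {M N P : Submodule F H} (hMN : LeftPar F H M N) (hNP : LeftPar F H N P) :
    LeftPar F H M P := by
  obtain ⟨g, hg, hN⟩ := hMN
  obtain ⟨k, hk, hP⟩ := hNP
  exact ⟨k * g, mul_ne_zero hk hg, by rw [hP, hN, image_mul_left_image_mul_left]⟩

lemma RightPar.image_mul_left {M N M' N' : Submodule F H} (h : RightPar F H M N) (g : H)
    (hM' : (M' : Set H) = (g * ·) '' (M : Set H)) (hN' : (N' : Set H) = (g * ·) '' (N : Set H)) :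
    RightPar F H M' N' := by
  obtain ⟨k, hk, hN⟩ := h
  exact ⟨k, hk, by rw [hN', hN, hM', image_mul_left_image_mul_right]⟩

section ParClass

variable {par : Line F H → Line F H → Prop} {L N : Line F H}

lemma par_iff_leftPar (hL : parClass F H par L = leftClass F H L) :
    par N L ↔ LeftPar F H N.1 L.1 :=
  Set.ext_iff.mp hL N

lemma par_iff_rightPar (hL : parClass F H par L = rightClass F H L) :
    par N L ↔ RightPar F H N.1 L.1 :=
  Set.ext_iff.mp hL N

lemma par_of_leftPar_of_par (hL : parClass F H par L = leftClass F H L) {N' : Line F H}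
    (hN : par N L) (hNN' : LeftPar F H N.1 N'.1) : par N' L :=
  (par_iff_leftPar hL).mpr (hNN'.symm.trans ((par_iff_leftPar hL).mp hN))

end ParClass

/- If the class of `M` is a left class, all four lines lie in it. Otherwise `N = M·k` gives
`g·N = (g·M)·k`; this finishes the proof unless the class of `g·M` is a left class, which then
contains `M`, hence `N`, hence `g·N`. -/
lemma IsCliffordLike.par_image_mul_left {par : Line F H → Line F H → Prop}
    (hpar : IsCliffordLike F H par) {g : H} (hg : g ≠ 0) {M N M' N' : Line F H}
    (hM' : (M'.1 : Set H) = (g * ·) '' (M.1 : Set H))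
    (hN' : (N'.1 : Set H) = (g * ·) '' (N.1 : Set H)) (h : par M N) : par M' N' := by
  obtain ⟨⟨hequiv, -⟩, hclass⟩ := hpar
  have hMM' : LeftPar F H M.1 M'.1 := ⟨g, hg, hM'⟩
  have hNN' : LeftPar F H N.1 N'.1 := ⟨g, hg, hN'⟩
  rcases hclass M with hMclass | hMclass
  · have hM'M : par M' M := par_of_leftPar_of_par hMclass (hequiv.refl M) hMM'
    have hN'M : par N' M := par_of_leftPar_of_par hMclass (hequiv.symm h) hNN'
    exact hequiv.trans hM'M (hequiv.symm hN'M)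
  · have hN'M' : RightPar F H N'.1 M'.1 :=
      ((par_iff_rightPar hMclass).mp (hequiv.symm h)).image_mul_left g hN' hM'
    rcases hclass M' with hM'class | hM'class
    · have hMM'par : par M M' := (par_iff_leftPar hM'class).mpr hMM'
      exact hequiv.symm
        (par_of_leftPar_of_par hM'class (hequiv.trans (hequiv.symm h) hMM'par) hNN')
    · exact hequiv.symm ((par_iff_rightPar hM'class).mpr hN'M')

end CliffordLike

theorem leftTranslation_preserves
    (par : Line F H → Line F H → Prop) (hpar : IsCliffordLike F H par)
    (g : H) (hg : g ≠ 0) :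
    Preserves F H (fun x => g * x) par := by
  intro M N M' N' hM' hN'
  exact ⟨hpar.par_image_mul_left hg hM' hN',
    hpar.par_image_mul_left (inv_ne_zero hg) (eq_image_inv_mul_of_eq_image_mul hg hM')
      (eq_image_inv_mul_of_eq_image_mul hg hN')⟩
end

section
/- Let ∥ be a Clifford-like parallelism. Every F-linear bijection β : H → H that preserves the left Clifford parallelism ∥ℓ also preserves ∥. -/
variable (F H : Type*) [Field F] [DivisionRing H] [Algebra F H]

namespace CliffAux
open Module Submodule

variable {F H}

/-- Left translate of a submodule. -/
noncomputable abbrev lmul (g : H) (M : Submodule F H) : Submodule F H :=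
  M.map (LinearMap.mulLeft F g)

/-- Right translate of a submodule. -/
noncomputable abbrev rmul (g : H) (M : Submodule F H) : Submodule F H :=
  M.map (LinearMap.mulRight F g)

lemma mem_lmul {g x : H} {M : Submodule F H} : x ∈ lmul g M ↔ ∃ m ∈ M, g * m = x := by
  simp [lmul, Submodule.mem_map]

lemma mem_rmul {g x : H} {M : Submodule F H} : x ∈ rmul g M ↔ ∃ m ∈ M, m * g = x := by
  simp [rmul, Submodule.mem_map]

lemma lmul_coe (g : H) (M : Submodule F H) :
    ((lmul g M : Submodule F H) : Set H) = (fun m => g * m) '' (M : Set H) := by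
  ext x; simp [mem_lmul, Set.mem_image]

lemma rmul_coe (g : H) (M : Submodule F H) :
    ((rmul g M : Submodule F H) : Set H) = (fun m => m * g) '' (M : Set H) := by
  ext x; simp [mem_rmul, Set.mem_image]

lemma lmul_lmul (a b : H) (M : Submodule F H) : lmul a (lmul b M) = lmul (a * b) M := by
  unfold lmul
  rw [← Submodule.map_comp]
  congr 1
  ext x
  simp [mul_assoc]

lemma rmul_rmul (a b : H) (M : Submodule F H) : rmul a (rmul b M) = rmul (b * a) M := by
  unfold rmul
  rw [← Submodule.map_comp]
  congr 1
  ext x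
  simp [mul_assoc]

lemma lmul_one (M : Submodule F H) : lmul 1 M = M := by
  unfold lmul
  convert Submodule.map_id M using 2
  ext x; simp
  ext x; simp

lemma rmul_one (M : Submodule F H) : rmul 1 M = M := by
  unfold rmul
  convert Submodule.map_id M using 2
  ext x; simp
  ext x; simp

lemma lmul_rmul (a b : H) (M : Submodule F H) : lmul a (rmul b M) = rmul b (lmul a M) := by
  unfold lmul rmul
  rw [← Submodule.map_comp, ← Submodule.map_comp]
  congr 1
  ext x
  simp [mul_assoc]

/-- Left multiplication by a nonzero element as a linear equivalence. -/
noncomputable def lmulE (g : H) (hg : g ≠ 0) : H ≃ₗ[F] H :=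
  LinearEquiv.ofLinear (LinearMap.mulLeft F g) (LinearMap.mulLeft F g⁻¹)
    (by ext x; simp [← mul_assoc, mul_inv_cancel₀ hg])
    (by ext x; simp [← mul_assoc, inv_mul_cancel₀ hg])

lemma lmul_eq_mapE (g : H) (hg : g ≠ 0) (M : Submodule F H) :
    lmul g M = M.map ((lmulE g hg : H ≃ₗ[F] H) : H →ₗ[F] H) := rfl

lemma finrank_lmul (g : H) (hg : g ≠ 0) (M : Submodule F H) :
    finrank F (lmul g M) = finrank F M := by
  rw [lmul_eq_mapE g hg]
  exact LinearEquiv.finrank_map_eq _ _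

noncomputable def rmulE (g : H) (hg : g ≠ 0) : H ≃ₗ[F] H :=
  LinearEquiv.ofLinear (LinearMap.mulRight F g) (LinearMap.mulRight F g⁻¹)
    (by ext x; simp [mul_assoc, inv_mul_cancel₀ hg])
    (by ext x; simp [mul_assoc, mul_inv_cancel₀ hg])

lemma rmul_eq_mapE (g : H) (hg : g ≠ 0) (M : Submodule F H) :
    rmul g M = M.map ((rmulE g hg : H ≃ₗ[F] H) : H →ₗ[F] H) := rfl

lemma finrank_rmul (g : H) (hg : g ≠ 0) (M : Submodule F H) :
    finrank F (rmul g M) = finrank F M := by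
  rw [rmul_eq_mapE g hg]
  exact LinearEquiv.finrank_map_eq _ _

lemma leftPar_iff {M N : Submodule F H} :
    LeftPar F H M N ↔ ∃ g : H, g ≠ 0 ∧ N = lmul g M := by
  constructor
  · rintro ⟨g, hg, h⟩
    exact ⟨g, hg, SetLike.coe_injective (by rw [lmul_coe]; exact h)⟩
  · rintro ⟨g, hg, rfl⟩
    exact ⟨g, hg, (lmul_coe g M).symm⟩

lemma rightPar_iff {M N : Submodule F H} :
    RightPar F H M N ↔ ∃ g : H, g ≠ 0 ∧ N = rmul g M := by
  constructor
  · rintro ⟨g, hg, h⟩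
    exact ⟨g, hg, SetLike.coe_injective (by rw [rmul_coe]; exact h)⟩
  · rintro ⟨g, hg, rfl⟩
    exact ⟨g, hg, (rmul_coe g M).symm⟩

lemma lp_lmul {g : H} (hg : g ≠ 0) (M : Submodule F H) : LeftPar F H M (lmul g M) :=
  leftPar_iff.mpr ⟨g, hg, rfl⟩

lemma rp_rmul {g : H} (hg : g ≠ 0) (M : Submodule F H) : RightPar F H M (rmul g M) :=
  rightPar_iff.mpr ⟨g, hg, rfl⟩

lemma lp_refl (M : Submodule F H) : LeftPar F H M M :=
  leftPar_iff.mpr ⟨1, one_ne_zero, (lmul_one M).symm⟩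

lemma rp_refl (M : Submodule F H) : RightPar F H M M :=
  rightPar_iff.mpr ⟨1, one_ne_zero, (rmul_one M).symm⟩

lemma lp_symm {M N : Submodule F H} (h : LeftPar F H M N) : LeftPar F H N M := by
  obtain ⟨g, hg, rfl⟩ := leftPar_iff.mp h
  exact leftPar_iff.mpr ⟨g⁻¹, inv_ne_zero hg, by rw [lmul_lmul, inv_mul_cancel₀ hg, lmul_one]⟩

lemma rp_symm {M N : Submodule F H} (h : RightPar F H M N) : RightPar F H N M := by
  obtain ⟨g, hg, rfl⟩ := rightPar_iff.mp h
  exact rightPar_iff.mpr ⟨g⁻¹, inv_ne_zero hg, by rw [rmul_rmul, mul_inv_cancel₀ hg, rmul_one]⟩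

lemma lp_trans {M N P : Submodule F H} (h1 : LeftPar F H M N) (h2 : LeftPar F H N P) :
    LeftPar F H M P := by
  obtain ⟨g, hg, rfl⟩ := leftPar_iff.mp h1
  obtain ⟨k, hk, rfl⟩ := leftPar_iff.mp h2
  exact leftPar_iff.mpr ⟨k * g, mul_ne_zero hk hg, lmul_lmul k g M⟩

lemma rp_trans {M N P : Submodule F H} (h1 : RightPar F H M N) (h2 : RightPar F H N P) :
    RightPar F H M P := by
  obtain ⟨g, hg, rfl⟩ := rightPar_iff.mp h1
  obtain ⟨k, hk, rfl⟩ := rightPar_iff.mp h2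
  exact rightPar_iff.mpr ⟨g * k, mul_ne_zero hg hk, rmul_rmul k g M⟩

lemma lp_rmul_congr {M N : Submodule F H} (c : H) (h : LeftPar F H M N) :
    LeftPar F H (rmul c M) (rmul c N) := by
  obtain ⟨g, hg, rfl⟩ := leftPar_iff.mp h
  exact leftPar_iff.mpr ⟨g, hg, (lmul_rmul g c M).symm⟩

lemma rp_lmul_congr {M N : Submodule F H} (c : H) (h : RightPar F H M N) :
    RightPar F H (lmul c M) (lmul c N) := by
  obtain ⟨g, hg, rfl⟩ := rightPar_iff.mp h
  exact rightPar_iff.mpr ⟨g, hg, lmul_rmul c g M⟩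

section Quadratic
open Polynomial


lemma algebraMap_inj : Function.Injective (algebraMap F H) :=
  RingHom.injective _

lemma nzsmul : ∀ (a : F) (x : H), a • x = 0 → a = 0 ∨ x = 0 := by
  intro a x h
  rw [Algebra.smul_def] at h
  rcases mul_eq_zero.mp h with h | h
  · exact Or.inl ((map_eq_zero_iff _ (algebraMap_inj (F := F) (H := H))).mp h)
  · exact Or.inr h

lemma smul_one_eq_zero {a : F} (h : a • (1 : H) = 0) : a = 0 := by
  rcases nzsmul a 1 h with h | h
  · exact h
  · exact absurd h one_ne_zero

lemma haveFD (hdim : Module.finrank F H = 4) : FiniteDimensional F H :=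
  Module.finite_of_finrank_pos (by rw [hdim]; norm_num)

/-- Every element outside `F·1` satisfies a quadratic equation over `F`. -/
lemma exists_quadratic (hcenter : CenterEqF F H) (hdim : Module.finrank F H = 4)
    {q : H} (hq : q ∉ Submodule.span F {(1 : H)}) :
    ∃ t n : F, q * q = t • q + n • (1 : H) := by
  haveI : FiniteDimensional F H := haveFD hdim
  suffices hmem : q * q ∈ Submodule.span F {(1 : H), q} by
    obtain ⟨n, t, h⟩ := Submodule.mem_span_pair.mp hmem
    exact ⟨t, n, by rw [← h]; abel⟩
  by_contra hq2
  set S1 : Submodule F H := Submodule.span F {(1 : H)} with hS1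
  set S2 : Submodule F H := Submodule.span F {(1 : H), q} with hS2
  set S3 : Submodule F H := Submodule.span F {(1 : H), q, q * q} with hS3
  by_cases hq3 : q * q * q ∈ S3
  · -- q has a cubic minimal polynomial; contradiction by the tower law or directly.
    rw [hS3, Submodule.mem_span_insert] at hq3
    obtain ⟨c0, z, hz, hzeq⟩ := hq3
    rw [Submodule.mem_span_insert] at hz
    obtain ⟨c1, w, hw, hweq⟩ := hz
    rw [Submodule.mem_span_singleton] at hw
    obtain ⟨c2, hc2⟩ := hw
    -- q*q*q = c0 • 1 + c1 • q + c2 • (q*q)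
    have hcube : q * q * q = c0 • (1 : H) + c1 • q + c2 • (q * q) := by
      rw [hzeq, hweq, ← hc2]; abel
    set m : F[X] := X ^ 3 - (C c2 * X ^ 2 + C c1 * X + C c0) with hm
    have hdeg : m.natDegree = 3 := by
      rw [hm]
      compute_degree!
    have hm0 : m ≠ 0 := fun h => by simp [h] at hdeg
    have haev : (aeval q) m = 0 := by
      have h9 : (aeval q) m = q ^ 3 - (c2 • q ^ 2 + c1 • q + c0 • (1 : H)) := by
        simp [hm, Algebra.smul_def]
      rw [h9, pow_succ, pow_succ, pow_one, hcube]
      abel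
    by_cases hirr : Irreducible m
    · -- tower law contradiction : 3 ∣ 4
      haveI : Fact (Irreducible m) := ⟨hirr⟩
      set E := AdjoinRoot m with hE
      have hlift : ∀ p ∈ Ideal.span {m}, (aeval q).toRingHom p = 0 := by
        intro p hp
        rw [Ideal.mem_span_singleton] at hp
        obtain ⟨c, rfl⟩ := hp
        simp [map_mul, haev]
      letI φ : E →+* H := Ideal.Quotient.lift _ (aeval q).toRingHom hlift
      letI : Module E H := φ.toModule
      have hsmul_def : ∀ (e : E) (x : H), e • x = φ e * x := fun _ _ => rfl
      haveI : IsScalarTower F E H := by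
        constructor
        intro a e x
        have h1 : a • e = algebraMap F E a * e := Algebra.smul_def a e
        have h2 : φ (algebraMap F E a) = algebraMap F H a := by
          have : algebraMap F E a = Ideal.Quotient.mk _ (C a) := rfl
          rw [this]
          show (aeval q).toRingHom (C a) = _
          simp
        rw [hsmul_def, hsmul_def, h1, map_mul, h2, Algebra.smul_def, mul_assoc]
      have htower := Module.finrank_mul_finrank F E H
      have hE3 : Module.finrank F E = 3 := by
        rw [(AdjoinRoot.powerBasis hm0).finrank, AdjoinRoot.powerBasis_dim, hdeg]
      rw [hE3, hdim] at htower
      omega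
    · -- m reducible : it has a root, hence q satisfies a quadratic — contradiction.
      have hnotunit : ¬IsUnit m := by
        intro hu
        have := Polynomial.natDegree_eq_zero_of_isUnit hu
        omega
      rw [irreducible_iff] at hirr
      push_neg at hirr
      obtain ⟨f, g, hfg, hfu, hgu⟩ := hirr hnotunit
      have hf0 : f ≠ 0 := fun h => hm0 (by rw [hfg, h, zero_mul])
      have hg0 : g ≠ 0 := fun h => hm0 (by rw [hfg, h, mul_zero])
      have hsum : f.natDegree + g.natDegree = 3 := by
        rw [← Polynomial.natDegree_mul hf0 hg0, ← hfg, hdeg]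
      have hfd : f.natDegree ≠ 0 := by
        intro h
        apply hfu
        rw [Polynomial.eq_C_of_natDegree_eq_zero h]
        refine Polynomial.isUnit_C.mpr (isUnit_iff_ne_zero.mpr ?_)
        intro hc
        apply hf0
        rw [Polynomial.eq_C_of_natDegree_eq_zero h, hc, map_zero]
      have hgd : g.natDegree ≠ 0 := by
        intro h
        apply hgu
        rw [Polynomial.eq_C_of_natDegree_eq_zero h]
        refine Polynomial.isUnit_C.mpr (isUnit_iff_ne_zero.mpr ?_)
        intro hc
        apply hg0
        rw [Polynomial.eq_C_of_natDegree_eq_zero h, hc, map_zero]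
      -- one of f, g has degree 1; it yields a root of m
      have hroot : ∃ r : F, m.IsRoot r := by
        have hlin : ∃ p : F[X], p ∣ m ∧ p.natDegree = 1 := by
          rcases Nat.lt_or_ge f.natDegree 2 with h1 | h1
          · exact ⟨f, ⟨g, hfg⟩, by omega⟩
          · exact ⟨g, ⟨f, by rw [hfg, mul_comm]⟩, by omega⟩
        obtain ⟨p, hpm, hp1⟩ := hlin
        have hc1 : p.coeff 1 ≠ 0 := by
          have : p.coeff 1 = p.leadingCoeff := by rw [Polynomial.leadingCoeff, hp1]
          rw [this]
          exact Polynomial.leadingCoeff_ne_zero.mpr (fun h => by simp [h] at hp1)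
        refine ⟨-(p.coeff 0 / p.coeff 1), Polynomial.IsRoot.dvd ?_ hpm⟩
        have hpeq := Polynomial.eq_X_add_C_of_natDegree_le_one (le_of_eq hp1)
        rw [Polynomial.IsRoot, hpeq]
        simp
        try field_simp
        ring
      obtain ⟨r, hr⟩ := hroot
      obtain ⟨g2, hg2⟩ := Polynomial.dvd_iff_isRoot.mpr hr
      have hg20 : g2 ≠ 0 := fun h => hm0 (by rw [hg2, h, mul_zero])
      have hg2d : g2.natDegree = 2 := by
        have := Polynomial.natDegree_mul (p := X - C r) (q := g2)
          (fun h => by simp [Polynomial.X_sub_C_ne_zero] at h) hg20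
        rw [← hg2, hdeg, Polynomial.natDegree_X_sub_C] at this
        omega
      have haev2 : (q - r • 1) * (aeval q) g2 = 0 := by
        have : (aeval q) m = (q - r • 1) * (aeval q) g2 := by
          rw [hg2, map_mul]
          congr 1
          simp [Algebra.smul_def]
        rw [← this, haev]
      have hqr : q - r • 1 ≠ 0 := by
        intro h
        apply hq
        have : q = r • (1 : H) := by linear_combination (norm := abel) h
        rw [this]
        exact Submodule.smul_mem _ _ (Submodule.mem_span_singleton_self _)
      have haevg2 : (aeval q) g2 = 0 := by
        rcases mul_eq_zero.mp haev2 with h | h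
        · exact absurd h hqr
        · exact h
      have hexp : (aeval q) g2 = g2.coeff 0 • (1 : H) + g2.coeff 1 • q + g2.coeff 2 • (q * q) := by
        rw [Polynomial.aeval_eq_sum_range (p := g2) (x := q)]
        rw [hg2d]
        rw [Finset.sum_range_succ, Finset.sum_range_succ, Finset.sum_range_one]
        simp [pow_two]
      have hlc : g2.coeff 2 ≠ 0 := by
        have : g2.coeff 2 = g2.leadingCoeff := by rw [Polynomial.leadingCoeff, hg2d]
        rw [this]
        exact Polynomial.leadingCoeff_ne_zero.mpr hg20
      apply hq2
      have : q * q = (g2.coeff 2)⁻¹ • (-(g2.coeff 0 • (1 : H) + g2.coeff 1 • q)) := by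
        rw [hexp] at haevg2
        have h5 : g2.coeff 2 • (q * q) = -(g2.coeff 0 • (1 : H) + g2.coeff 1 • q) := by
          linear_combination (norm := abel) haevg2
        rw [← h5, smul_smul, inv_mul_cancel₀ hlc, one_smul]
      rw [this]
      refine Submodule.smul_mem _ _ (Submodule.neg_mem _ (Submodule.add_mem _ ?_ ?_))
      · exact Submodule.smul_mem _ _ (Submodule.subset_span (by simp))
      · exact Submodule.smul_mem _ _ (Submodule.subset_span (by simp))
  · -- 1, q, q², q³ span H, hence H is commutative: contradiction with the centre.
    set S4 : Submodule F H := Submodule.span F {(1 : H), q, q * q, q * q * q} with hS4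
    have h12 : S1 < S2 := by
      refine lt_of_le_of_ne (Submodule.span_mono (by intro x hx; simp at hx; simp [hx])) ?_
      intro h
      exact hq (h ▸ Submodule.subset_span (by simp))
    have h23 : S2 < S3 := by
      refine lt_of_le_of_ne (Submodule.span_mono ?_) ?_
      · intro x hx; simp at hx; rcases hx with h | h <;> simp [h]
      · intro h
        exact hq2 (h ▸ Submodule.subset_span (by simp))
    have h34 : S3 < S4 := by
      refine lt_of_le_of_ne (Submodule.span_mono ?_) ?_
      · intro x hx; simp at hx; rcases hx with h | h | h <;> simp [h]
      · intro h
        exact hq3 (h ▸ Submodule.subset_span (by simp))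
    have hf1 : Module.finrank F S1 = 1 := finrank_span_singleton one_ne_zero
    have hf2 : Module.finrank F S2 ≥ 2 := by
      have := Submodule.finrank_lt_finrank_of_lt h12
      omega
    have hf3 : Module.finrank F S3 ≥ 3 := by
      have := Submodule.finrank_lt_finrank_of_lt h23
      omega
    have hf4 : Module.finrank F S4 ≥ 4 := by
      have := Submodule.finrank_lt_finrank_of_lt h34
      omega
    have hf4' : Module.finrank F S4 ≤ 4 := hdim ▸ Submodule.finrank_le S4
    have hS4top : S4 = ⊤ := Submodule.eq_top_of_finrank_eq (by omega)
    have hqcentral : ∀ x : H, q * x = x * q := by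
      intro x
      have hx : x ∈ S4 := hS4top ▸ Submodule.mem_top
      induction hx using Submodule.span_induction with
      | mem y hy =>
        simp only [Set.mem_insert_iff, Set.mem_singleton_iff] at hy
        rcases hy with rfl | rfl | rfl | rfl
        · rw [one_mul, mul_one]
        · rfl
        · rw [← mul_assoc]
        · rw [← mul_assoc, ← mul_assoc]
      | zero => rw [mul_zero, zero_mul]
      | add y z _ _ hy hz => rw [mul_add, add_mul, hy, hz]
      | smul a y _ hy => rw [mul_smul_comm, smul_mul_assoc, hy]
    obtain ⟨a, ha⟩ := (hcenter q).mp hqcentral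
    apply hq
    rw [ha, Algebra.algebraMap_eq_smul_one]
    exact Submodule.smul_mem _ _ (Submodule.mem_span_singleton_self _)

end Quadratic
section Fields

lemma fr_span_pair {y x : H} (hy : y ≠ 0) (hx : x ∉ Submodule.span F {y}) :
    Module.finrank F (Submodule.span F {y, x}) = 2 := by
  have hli : LinearIndependent F ![y, x] := by
    rw [LinearIndependent.pair_iff]
    intro s t hst
    by_cases ht : t = 0
    · subst ht
      rw [zero_smul, add_zero] at hst
      rcases nzsmul s y hst with h | h
      · exact ⟨h, rfl⟩
      · exact absurd h hy
    · exfalso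
      apply hx
      have : x = (-t⁻¹ * s) • y := by
        have h1 : t • x = -(s • y) := by linear_combination (norm := abel) hst
        have h2 := congrArg (fun z => t⁻¹ • z) h1
        simp only [smul_smul, inv_mul_cancel₀ ht, one_smul] at h2
        rw [h2]
        module
      rw [this]
      exact Submodule.smul_mem _ _ (Submodule.mem_span_singleton_self _)
  have hcard := finrank_span_eq_card hli
  have hrange : Set.range ![y, x] = {y, x} := by
    ext z
    simp only [Matrix.range_cons, Matrix.range_empty, Set.mem_insert_iff,
      Set.mem_singleton_iff, Set.union_empty, Set.union_singleton]
    tauto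
  rw [hrange] at hcard
  simpa using hcard

lemma line_through_one {L : Submodule F H} [FiniteDimensional F H]
    (hL : Module.finrank F L = 2) (h1 : (1 : H) ∈ L) :
    ∃ q : H, q ∈ L ∧ q ∉ Submodule.span F {(1 : H)} ∧ L = Submodule.span F {(1 : H), q} := by
  have hex : ∃ q ∈ L, q ∉ Submodule.span F {(1 : H)} := by
    rw [← SetLike.not_le_iff_exists]
    intro hle
    have := Submodule.finrank_mono (M := H) (R := F) hle
    rw [hL, finrank_span_singleton (one_ne_zero : (1:H) ≠ 0)] at this
    omega
  obtain ⟨q, hqL, hq1⟩ := hex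
  refine ⟨q, hqL, hq1, ?_⟩
  have hle : Submodule.span F {(1 : H), q} ≤ L := by
    rw [Submodule.span_le]
    intro z hz
    rcases hz with rfl | hz
    · exact h1
    · simp only [Set.mem_singleton_iff] at hz; subst hz; exact hqL
  have hfr : Module.finrank F (Submodule.span F {(1 : H), q}) = 2 :=
    fr_span_pair one_ne_zero hq1
  exact (Submodule.eq_of_le_of_finrank_le hle (by rw [hL, hfr])).symm

variable (hcenter : CenterEqF F H) (hdim : Module.finrank F H = 4)
include hcenter hdim

lemma line_one_mul_mem {L : Submodule F H}
    (hL : Module.finrank F L = 2) (h1 : (1 : H) ∈ L)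
    {u v : H} (hu : u ∈ L) (hv : v ∈ L) : u * v ∈ L := by
  haveI : FiniteDimensional F H := haveFD hdim
  obtain ⟨q, hqL, hq1, hspan⟩ := line_through_one hL h1
  obtain ⟨t, n, hquad⟩ := exists_quadratic hcenter hdim hq1
  rw [hspan] at hu hv ⊢
  obtain ⟨a, b, hab⟩ := Submodule.mem_span_pair.mp hu
  obtain ⟨c, d, hcd⟩ := Submodule.mem_span_pair.mp hv
  have hone : (1 : H) ∈ Submodule.span F {(1 : H), q} := Submodule.subset_span (by simp)
  have hqin : q ∈ Submodule.span F {(1 : H), q} := Submodule.subset_span (by simp)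
  have : u * v = (a * c) • (1 : H) + (a * d + b * c) • q + (b * d) • (q * q) := by
    rw [← hab, ← hcd]
    simp only [add_mul, mul_add, smul_mul_smul_comm, one_mul, mul_one]
    module
  rw [this, hquad]
  refine Submodule.add_mem _ (Submodule.add_mem _ ?_ ?_) ?_
  · exact Submodule.smul_mem _ _ hone
  · exact Submodule.smul_mem _ _ hqin
  · rw [smul_add, smul_smul, smul_smul]
    exact Submodule.add_mem _ (Submodule.smul_mem _ _ hqin) (Submodule.smul_mem _ _ hone)

lemma line_one_inv_mem {L : Submodule F H}
    (hL : Module.finrank F L = 2) (h1 : (1 : H) ∈ L)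
    {u : H} (hu : u ∈ L) (hu0 : u ≠ 0) : u⁻¹ ∈ L := by
  by_cases huF : u ∈ Submodule.span F {(1 : H)}
  · obtain ⟨a, ha⟩ := Submodule.mem_span_singleton.mp huF
    have ha0 : a ≠ 0 := by rintro rfl; simp at ha; exact hu0 ha.symm
    have : u⁻¹ = a⁻¹ • (1 : H) := by
      refine inv_eq_of_mul_eq_one_right ?_
      rw [← ha, smul_mul_smul_comm, mul_one, mul_inv_cancel₀ ha0, one_smul]
    rw [this]
    exact Submodule.smul_mem _ _ h1
  · obtain ⟨t, n, hquad⟩ := exists_quadratic hcenter hdim huF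
    by_cases hn : n = 0
    · exfalso
      rw [hn, zero_smul, add_zero] at hquad
      have : u * (u - t • 1) = 0 := by
        rw [mul_sub, hquad, mul_smul_comm, mul_one, sub_self]
      rcases mul_eq_zero.mp this with h | h
      · exact hu0 h
      · apply huF
        have : u = t • (1 : H) := by linear_combination (norm := abel) h
        rw [this]
        exact Submodule.smul_mem _ _ (Submodule.mem_span_singleton_self _)
    · have hkey : u * (n⁻¹ • (u - t • 1)) = 1 := by
        rw [mul_smul_comm, mul_sub, hquad, mul_smul_comm, mul_one]
        rw [show t • u + n • (1:H) - t • u = n • (1:H) by abel]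
        rw [smul_smul, inv_mul_cancel₀ hn, one_smul]
      have : u⁻¹ = n⁻¹ • (u - t • 1) := inv_eq_of_mul_eq_one_right hkey
      rw [this]
      exact Submodule.smul_mem _ _ (Submodule.sub_mem _ hu (Submodule.smul_mem _ _ h1))

lemma lmul_self_of_mem {L : Submodule F H}
    (hL : Module.finrank F L = 2) (h1 : (1 : H) ∈ L)
    {l : H} (hl : l ∈ L) (hl0 : l ≠ 0) : lmul l L = L := by
  apply le_antisymm
  · intro x hx
    obtain ⟨u, hu, rfl⟩ := mem_lmul.mp hx
    exact line_one_mul_mem hcenter hdim hL h1 hl hu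
  · intro x hx
    refine mem_lmul.mpr ⟨l⁻¹ * x, ?_, by rw [← mul_assoc, mul_inv_cancel₀ hl0, one_mul]⟩
    exact line_one_mul_mem hcenter hdim hL h1 (line_one_inv_mem hcenter hdim hL h1 hl hl0) hx

lemma rmul_self_of_mem {L : Submodule F H}
    (hL : Module.finrank F L = 2) (h1 : (1 : H) ∈ L)
    {l : H} (hl : l ∈ L) (hl0 : l ≠ 0) : rmul l L = L := by
  apply le_antisymm
  · intro x hx
    obtain ⟨u, hu, rfl⟩ := mem_rmul.mp hx
    exact line_one_mul_mem hcenter hdim hL h1 hu hl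
  · intro x hx
    refine mem_rmul.mpr ⟨x * l⁻¹, ?_, by rw [mul_assoc, inv_mul_cancel₀ hl0, mul_one]⟩
    exact line_one_mul_mem hcenter hdim hL h1 hx (line_one_inv_mem hcenter hdim hL h1 hl hl0)

/-- Two left-parallel lines with a common nonzero point coincide. -/
lemma leftPar_eq_of_common {N₁ N₂ : Submodule F H}
    (hfr : Module.finrank F N₁ = 2) (hpar : LeftPar F H N₁ N₂)
    {p : H} (hp0 : p ≠ 0) (hp1 : p ∈ N₁) (hp2 : p ∈ N₂) : N₁ = N₂ := by
  obtain ⟨g, hg, rfl⟩ := leftPar_iff.mp hpar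
  set L : Submodule F H := lmul p⁻¹ N₁ with hLdef
  have hpinv : (p⁻¹ : H) ≠ 0 := inv_ne_zero hp0
  have hLfr : Module.finrank F L = 2 := by rw [hLdef, finrank_lmul _ hpinv, hfr]
  have hL1 : (1 : H) ∈ L := mem_lmul.mpr ⟨p, hp1, inv_mul_cancel₀ hp0⟩
  have hN1 : N₁ = lmul p L := by
    rw [hLdef, lmul_lmul, mul_inv_cancel₀ hp0, lmul_one]
  have hN2 : lmul g N₁ = lmul (g * p) L := by rw [hN1, lmul_lmul]
  rw [hN2] at hp2 ⊢
  obtain ⟨l, hl, hleq⟩ := mem_lmul.mp hp2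
  have hl0 : l ≠ 0 := by
    rintro rfl
    rw [mul_zero] at hleq
    exact hp0 hleq.symm
  calc N₁ = lmul p L := hN1
  _ = lmul (g * p * l) L := by rw [hleq]
  _ = lmul (g * p) (lmul l L) := (lmul_lmul (g * p) l L).symm
  _ = lmul (g * p) L := by rw [lmul_self_of_mem hcenter hdim hLfr hL1 hl hl0]

end Fields
section Core

/-- A linear endomorphism sending each vector into its own span is a scalar. -/
lemma scalar_of_span {W : Type*} [AddCommGroup W] [Module F W]
    (h : W →ₗ[F] W) (hs : ∀ w : W, h w ∈ Submodule.span F {w}) :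
    ∃ b : F, ∀ w : W, h w = b • w := by
  by_cases hW : ∀ w : W, w = 0
  · exact ⟨1, fun w => by rw [hW w, map_zero, smul_zero]⟩
  push_neg at hW
  obtain ⟨w₀, hw₀⟩ := hW
  obtain ⟨b, hb⟩ := Submodule.mem_span_singleton.mp (hs w₀)
  refine ⟨b, fun w => ?_⟩
  by_cases hw : w = 0
  · rw [hw, map_zero, smul_zero]
  by_cases hdep : w ∈ Submodule.span F {w₀}
  · obtain ⟨d, hd⟩ := Submodule.mem_span_singleton.mp hdep
    rw [← hd, map_smul, ← hb, smul_smul, smul_smul, mul_comm]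
  · obtain ⟨c, hc⟩ := Submodule.mem_span_singleton.mp (hs w)
    obtain ⟨e, he⟩ := Submodule.mem_span_singleton.mp (hs (w + w₀))
    rw [map_add, ← hc, ← hb] at he
    have key : (e - c) • w = (b - e) • w₀ := by
      have := he
      rw [smul_add] at this
      rw [sub_smul, sub_smul]
      linear_combination (norm := abel) this
    have hec : e = c := by
      by_contra hne
      apply hdep
      have hinv : w = (e - c)⁻¹ • ((b - e) • w₀) := by
        rw [← key, smul_smul, inv_mul_cancel₀ (sub_ne_zero.mpr hne), one_smul]
      rw [hinv]
      exact Submodule.smul_mem _ _ (Submodule.smul_mem _ _ (Submodule.mem_span_singleton_self _))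
    have hbe : b = e := by
      by_contra hne
      apply hw₀
      have h0 : (b - e) • w₀ = 0 := by rw [← key, hec, sub_self, zero_smul]
      have := congrArg (fun z => (b - e)⁻¹ • z) h0
      simpa [smul_smul, inv_mul_cancel₀ (sub_ne_zero.mpr hne)] using this
    rw [← hc, hbe, hec]

variable (hcenter : CenterEqF F H) (hdim : Module.finrank F H = 4)
include hcenter hdim

/-- The core rigidity lemma: a linear bijection fixing `1` and mapping every line
to a left-parallel line is the identity. -/
lemma cl_id (ε : H ≃ₗ[F] H) (hone : ε 1 = 1)
    (hp : ∀ M : Submodule F H, Module.finrank F M = 2 →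
      ∃ g : H, g ≠ 0 ∧ M.map (ε : H →ₗ[F] H) = lmul g M) :
    ∀ x : H, ε x = x := by
  haveI : FiniteDimensional F H := haveFD hdim
  set F1 : Submodule F H := Submodule.span F {(1 : H)} with hF1
  -- Step 1: every line through 1 is fixed setwise
  have step1 : ∀ y : H, y ∉ F1 →
      (Submodule.span F {(1 : H), y}).map (ε : H →ₗ[F] H) = Submodule.span F {(1 : H), y} := by
    intro y hy
    set M := Submodule.span F {(1 : H), y} with hM
    have hfr : Module.finrank F M = 2 := fr_span_pair one_ne_zero hy
    obtain ⟨g, hg, hmap⟩ := hp M hfr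
    have hlp : LeftPar F H M (M.map (ε : H →ₗ[F] H)) := leftPar_iff.mpr ⟨g, hg, hmap⟩
    have h1M : (1 : H) ∈ M := Submodule.subset_span (by simp)
    have h1map : (1 : H) ∈ M.map (ε : H →ₗ[F] H) := by
      have := Submodule.mem_map_of_mem (f := (ε : H →ₗ[F] H)) h1M
      rwa [show (ε : H →ₗ[F] H) 1 = 1 from hone] at this
    exact (leftPar_eq_of_common hcenter hdim hfr hlp one_ne_zero h1M h1map).symm
  have step1' : ∀ y : H, y ∉ F1 → ε y ∈ Submodule.span F {(1 : H), y} := by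
    intro y hy
    rw [← step1 y hy]
    exact Submodule.mem_map_of_mem (Submodule.subset_span (by simp))
  -- Step 2: there is b : F with ε y - b • y ∈ F·1 for all y
  have step2 : ∃ b : F, ∀ y : H, ε y - b • y ∈ F1 := by
    set π := F1.mkQ with hπ
    set f : H →ₗ[F] H ⧸ F1 := π.comp (ε : H →ₗ[F] H) with hf
    have hker : F1 ≤ LinearMap.ker f := by
      intro x hx
      obtain ⟨a, ha⟩ := Submodule.mem_span_singleton.mp hx
      rw [LinearMap.mem_ker, hf, LinearMap.comp_apply, ← ha, map_smul,
        show (ε : H →ₗ[F] H) 1 = 1 from hone, hπ, Submodule.mkQ_apply,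
        Submodule.Quotient.mk_eq_zero]
      exact Submodule.smul_mem _ _ (Submodule.mem_span_singleton_self _)
    have hQ : ∀ y : H, f y ∈ Submodule.span F {π y} := by
      intro y
      by_cases hy : y ∈ F1
      · have : f y = 0 := hker hy
        rw [this]; exact Submodule.zero_mem _
      · obtain ⟨a, b, hab⟩ := Submodule.mem_span_pair.mp (step1' y hy)
        have hπ1 : π (1 : H) = 0 := by
          rw [Submodule.mkQ_apply, Submodule.Quotient.mk_eq_zero]
          exact Submodule.mem_span_singleton_self _
        have : f y = b • π y := by
          rw [hf, LinearMap.comp_apply, show (ε : H →ₗ[F] H) y = ε y from rfl, ← hab,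
            map_add, map_smul, map_smul, hπ1, smul_zero, zero_add]
        rw [this]
        exact Submodule.smul_mem _ _ (Submodule.mem_span_singleton_self _)
    set h0 := F1.liftQ f hker with hh0
    have hs : ∀ w : H ⧸ F1, h0 w ∈ Submodule.span F {w} := by
      intro w
      obtain ⟨y, rfl⟩ := Submodule.mkQ_surjective F1 w
      have : h0 (π y) = f y := by
        rw [hh0, ← LinearMap.comp_apply, Submodule.liftQ_mkQ]
      rw [Submodule.mkQ_apply] at this ⊢
      rw [this]
      exact hQ y
    obtain ⟨b, hb⟩ := scalar_of_span h0 hs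
    refine ⟨b, fun y => ?_⟩
    have : π (ε y - b • y) = 0 := by
      rw [map_sub, map_smul]
      have h1 : π (ε y) = f y := rfl
      have h2 : h0 (π y) = f y := by rw [hh0, ← LinearMap.comp_apply, Submodule.liftQ_mkQ]
      rw [h1, ← h2, hb]
      exact sub_self _
    rwa [Submodule.mkQ_apply, Submodule.Quotient.mk_eq_zero] at this
  obtain ⟨b, hCL2⟩ := step2
  -- Step 3: find y ∉ F·1 with ε y = b • y
  set A : H →ₗ[F] H := (ε : H →ₗ[F] H) - b • LinearMap.id with hA
  have hAy : ∀ y : H, A y = ε y - b • y := fun y => rfl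
  have hrange : LinearMap.range A ≤ F1 := by
    rintro x ⟨y, rfl⟩
    rw [hAy]
    exact hCL2 y
  have hrank : Module.finrank F (LinearMap.range A) ≤ 1 := by
    have := Submodule.finrank_mono (R := F) (M := H) hrange
    rwa [hF1, finrank_span_singleton (one_ne_zero : (1:H) ≠ 0)] at this
  have hrn := LinearMap.finrank_range_add_finrank_ker A
  rw [hdim] at hrn
  have hker3 : 3 ≤ Module.finrank F (LinearMap.ker A) := by omega
  have hkerex : ∃ y ∈ LinearMap.ker A, y ∉ F1 := by
    rw [← SetLike.not_le_iff_exists]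
    intro hle
    have := Submodule.finrank_mono (R := F) (M := H) hle
    rw [hF1, finrank_span_singleton (one_ne_zero : (1:H) ≠ 0)] at this
    omega
  obtain ⟨y, hyker, hyF1⟩ := hkerex
  have hεy : ε y = b • y := by
    have := LinearMap.mem_ker.mp hyker
    rw [hAy] at this
    linear_combination (norm := abel) this
  have hy0 : y ≠ 0 := fun h => hyF1 (h ▸ Submodule.zero_mem F1)
  have hb0 : b ≠ 0 := by
    rintro rfl
    rw [zero_smul] at hεy
    exact hy0 (ε.map_eq_zero_iff.mp hεy)
  -- Step 4: ε x = b • x off the plane span {1, y}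
  set P : Submodule F H := Submodule.span F {(1 : H), y} with hP
  have step4 : ∀ x : H, x ∉ P → ε x = b • x := by
    intro x hxP
    have hx1 : x ∉ F1 := fun h => hxP (Submodule.span_mono (by simp) h)
    have hxy : x ∉ Submodule.span F {y} := fun h =>
      hxP (Submodule.span_mono (by intro z hz; simp at hz; simp [hz]) h)
    set M := Submodule.span F {y, x} with hM
    have hfr : Module.finrank F M = 2 := fr_span_pair hy0 hxy
    obtain ⟨g, hg, hmap⟩ := hp M hfr
    have hlp : LeftPar F H M (M.map (ε : H →ₗ[F] H)) := leftPar_iff.mpr ⟨g, hg, hmap⟩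
    have hyM : y ∈ M := Submodule.subset_span (by simp)
    have hbyM : b • y ∈ M := Submodule.smul_mem _ _ hyM
    have hbymap : b • y ∈ M.map (ε : H →ₗ[F] H) := by
      have := Submodule.mem_map_of_mem (f := (ε : H →ₗ[F] H)) hyM
      rwa [show (ε : H →ₗ[F] H) y = b • y from hεy] at this
    have hby0 : b • y ≠ 0 := by
      intro h
      rcases nzsmul b y h with h | h
      · exact hb0 h
      · exact hy0 h
    have hMfix : M = M.map (ε : H →ₗ[F] H) :=
      leftPar_eq_of_common hcenter hdim hfr hlp hby0 hbyM hbymap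
    have hεxM : ε x ∈ M := by
      rw [hMfix]
      exact Submodule.mem_map_of_mem (Submodule.subset_span (by simp))
    obtain ⟨c, d, hcd⟩ := Submodule.mem_span_pair.mp hεxM
    obtain ⟨a₂, ha₂⟩ := Submodule.mem_span_singleton.mp (hCL2 x)
    -- a₂ • 1 = c • y + (d - b) • x
    have hkey : a₂ • (1 : H) = c • y + (d - b) • x := by
      rw [ha₂, ← hcd, sub_smul]
      abel
    have h1M : (1 : H) ∉ M := by
      intro h1M
      obtain ⟨c', d', hc'd'⟩ := Submodule.mem_span_pair.mp h1M
      by_cases hd' : d' = 0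
      · rw [hd', zero_smul, add_zero] at hc'd'
        have hc'0 : c' ≠ 0 := by
          rintro rfl
          rw [zero_smul] at hc'd'
          exact one_ne_zero hc'd'.symm
        apply hyF1
        rw [hF1]
        rw [Submodule.mem_span_singleton]
        refine ⟨c'⁻¹, ?_⟩
        have := congrArg (fun z => c'⁻¹ • z) hc'd'
        simpa [smul_smul, inv_mul_cancel₀ hc'0] using this.symm
      · apply hxP
        have hx : x = d'⁻¹ • ((1 : H) - c' • y) := by
          have h9 : d' • x = (1 : H) - c' • y := by
            linear_combination (norm := abel) hc'd'
          rw [← h9, smul_smul, inv_mul_cancel₀ hd', one_smul]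
        rw [hP, hx]
        refine Submodule.smul_mem _ _ (Submodule.sub_mem _ ?_ ?_)
        · exact Submodule.subset_span (by simp)
        · exact Submodule.smul_mem _ _ (Submodule.subset_span (by simp))
    have ha₂0 : a₂ = 0 := by
      by_contra hne
      apply h1M
      have : (1 : H) = a₂⁻¹ • (c • y + (d - b) • x) := by
        rw [← hkey, smul_smul, inv_mul_cancel₀ hne, one_smul]
      rw [this]
      refine Submodule.smul_mem _ _ (Submodule.add_mem _ ?_ ?_)
      · exact Submodule.smul_mem _ _ (Submodule.subset_span (by simp))
      · exact Submodule.smul_mem _ _ (Submodule.subset_span (by simp))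
    have : ε x - b • x = 0 := by rw [← ha₂, ha₂0, zero_smul]
    linear_combination (norm := abel) this
  -- Step 5: ε = b • id everywhere
  have step5 : ∀ v : H, ε v = b • v := by
    have hwex : ∃ w : H, w ∉ P := by
      have : ¬((⊤ : Submodule F H) ≤ P) := by
        intro hle
        have h1 := Submodule.finrank_mono (R := F) (M := H) hle
        have h2 : Module.finrank F P ≤ 2 := le_of_eq (fr_span_pair one_ne_zero hyF1)
        rw [finrank_top, hdim] at h1
        omega
      obtain ⟨w, _, hw⟩ := SetLike.not_le_iff_exists.mp this
      exact ⟨w, hw⟩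
    obtain ⟨w, hw⟩ := hwex
    intro v
    by_cases hv : v ∈ P
    · have hvw : v + w ∉ P := fun h => hw (by
        have := Submodule.sub_mem P h hv
        simpa using this)
      have h1 := step4 (v + w) hvw
      have h2 := step4 w hw
      rw [map_add, h2, smul_add] at h1
      linear_combination (norm := abel) h1
    · exact step4 v hv
  -- Step 6: b = 1
  have hb1 : b = 1 := by
    have := step5 1
    rw [hone] at this
    have h0 : (b - 1) • (1 : H) = 0 := by
      rw [sub_smul, one_smul, ← this, sub_self]
    exact sub_eq_zero.mp (smul_one_eq_zero h0)
  intro x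
  rw [step5 x, hb1, one_smul]

end Core
section Mult

variable (hcenter : CenterEqF F H) (hdim : Module.finrank F H = 4)
include hcenter hdim

/-- A linear bijection fixing 1 and preserving left parallelism is multiplicative. -/
lemma mult_of_preserves (γ : H ≃ₗ[F] H) (hone : γ 1 = 1)
    (hpres : ∀ M N : Submodule F H, Module.finrank F M = 2 → Module.finrank F N = 2 →
      (LeftPar F H M N ↔ LeftPar F H (M.map (γ : H →ₗ[F] H)) (N.map (γ : H →ₗ[F] H)))) :
    ∀ x y : H, γ (x * y) = γ x * γ y := by
  intro x y
  by_cases hx : x = 0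
  · rw [hx, zero_mul, map_zero, zero_mul]
  have hγx : γ x ≠ 0 := fun h => hx (γ.map_eq_zero_iff.mp h)
  set ε : H ≃ₗ[F] H :=
    ((γ.symm.trans (lmulE x hx)).trans γ).trans (lmulE (γ x)⁻¹ (inv_ne_zero hγx)) with hε
  have hεapp : ∀ z : H, ε z = (γ x)⁻¹ * γ (x * γ.symm z) := fun z => rfl
  have hsymm1 : γ.symm (1 : H) = 1 := by
    conv_lhs => rw [← hone]
    exact γ.symm_apply_apply 1
  have hε1 : ε 1 = 1 := by
    rw [hεapp, hsymm1, mul_one, inv_mul_cancel₀ hγx]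
  have hp : ∀ M : Submodule F H, Module.finrank F M = 2 →
      ∃ g : H, g ≠ 0 ∧ M.map (ε : H →ₗ[F] H) = lmul g M := by
    intro M hfr
    set P := M.map (γ.symm : H →ₗ[F] H) with hP
    have hPfr : Module.finrank F P = 2 := by
      rw [hP, LinearEquiv.finrank_map_eq γ.symm M, hfr]
    have hlp : LeftPar F H P (lmul x P) := lp_lmul hx P
    have hfr2 : Module.finrank F (lmul x P) = 2 := by rw [finrank_lmul x hx, hPfr]
    have hlp2 := (hpres P (lmul x P) hPfr hfr2).mp hlp
    have hback : P.map (γ : H →ₗ[F] H) = M := by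
      rw [hP, ← Submodule.map_comp]
      convert Submodule.map_id M using 2
      ext z
      simp
    rw [hback] at hlp2
    obtain ⟨g, hg, hgeq⟩ := leftPar_iff.mp hlp2
    refine ⟨(γ x)⁻¹ * g, mul_ne_zero (inv_ne_zero hγx) hg, ?_⟩
    have hchain : M.map (ε : H →ₗ[F] H) =
        lmul (γ x)⁻¹ ((lmul x P).map (γ : H →ₗ[F] H)) := by
      ext z
      simp only [Submodule.mem_map, mem_lmul, hP]
      constructor
      · rintro ⟨m, hm, rfl⟩
        exact ⟨γ (x * γ.symm m), ⟨x * γ.symm m, ⟨γ.symm m, ⟨m, hm, rfl⟩, rfl⟩, rfl⟩,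
          (hεapp m).symm⟩
      · rintro ⟨u, ⟨v, ⟨w, ⟨m, hm, rfl⟩, rfl⟩, rfl⟩, rfl⟩
        exact ⟨m, hm, hεapp m⟩
    rw [hchain, hgeq, lmul_lmul]
  have hid := cl_id hcenter hdim ε hε1 hp (γ y)
  rw [hεapp, γ.symm_apply_apply] at hid
  have := congrArg (fun z => γ x * z) hid
  simpa [← mul_assoc, mul_inv_cancel₀ hγx] using this

omit hdim in
/-- Two elements satisfying the same quadratic (one of them non-central) are conjugate. -/
lemma conj_exists {q q' : H} (hq : q ∉ Submodule.span F {(1 : H)})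
    {t n : F} (h1 : q * q = t • q + n • (1 : H)) (h2 : q' * q' = t • q' + n • (1 : H)) :
    ∃ c : H, c ≠ 0 ∧ q' * c = c * q := by
  by_contra hcon
  push_neg at hcon
  have hψinj : ∀ z : H, q' * z - z * q = 0 → z = 0 := by
    intro z hz
    by_contra hz0
    exact hcon z hz0 (sub_eq_zero.mp hz)
  have hφ0 : ∀ w : H, q' * w + w * q - t • w = 0 := by
    intro w
    apply hψinj
    have e1 : q' * (q' * w) = t • (q' * w) + n • w := by
      rw [← mul_assoc, h2, add_mul, smul_mul_assoc, smul_mul_assoc, one_mul]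
    have e2 : (w * q) * q = t • (w * q) + n • w := by
      rw [mul_assoc, h1, mul_add, mul_smul_comm, mul_smul_comm, mul_one]
    have expand : q' * (q' * w + w * q - t • w) - (q' * w + w * q - t • w) * q =
        q' * (q' * w) - (w * q) * q - t • (q' * w) + t • (w * q) := by
      simp only [mul_add, add_mul, mul_sub, sub_mul, mul_smul_comm, smul_mul_assoc, mul_assoc]
      abel
    rw [expand, e1, e2]
    abel
  have h1' : q' + q - t • (1 : H) = 0 := by
    have := hφ0 1
    rwa [mul_one, one_mul] at this
  have hq'eq : q' = t • (1 : H) - q := by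
    linear_combination (norm := abel) h1'
  have hqc : ∀ w : H, q * w = w * q := by
    intro w
    have h2' := hφ0 w
    rw [hq'eq, sub_mul, smul_mul_assoc, one_mul] at h2'
    have h3 : w * q - q * w = 0 := by
      linear_combination (norm := abel) h2'
    exact (sub_eq_zero.mp h3).symm
  obtain ⟨a, ha⟩ := (hcenter q).mp hqc
  apply hq
  rw [ha, Algebra.algebraMap_eq_smul_one]
  exact Submodule.smul_mem _ _ (Submodule.mem_span_singleton_self _)

end Mult
section Par

/-- Left translate of a line. -/
noncomputable def lineL (g : H) (hg : g ≠ 0) (M : Line F H) : Line F H :=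
  ⟨lmul g M.1, by rw [finrank_lmul g hg, M.2]⟩

/-- Right translate of a line. -/
noncomputable def lineR (g : H) (hg : g ≠ 0) (M : Line F H) : Line F H :=
  ⟨rmul g M.1, by rw [finrank_rmul g hg, M.2]⟩

/-- Conjugate `c M c⁻¹` of a line. -/
noncomputable def conjLine (c : H) (hc : c ≠ 0) (M : Line F H) : Line F H :=
  lineL c hc (lineR c⁻¹ (inv_ne_zero hc) M)

lemma lineL_coe (g : H) (hg : g ≠ 0) (M : Line F H) : (lineL g hg M).1 = lmul g M.1 := rfl
lemma lineR_coe (g : H) (hg : g ≠ 0) (M : Line F H) : (lineR g hg M).1 = rmul g M.1 := rfl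
lemma conjLine_coe (c : H) (hc : c ≠ 0) (M : Line F H) :
    (conjLine c hc M).1 = lmul c (rmul c⁻¹ M.1) := rfl

lemma lp_lmul_congr {M N : Submodule F H} (c : H) (hc : c ≠ 0) (h : LeftPar F H M N) :
    LeftPar F H (lmul c M) (lmul c N) := by
  obtain ⟨g, hg, rfl⟩ := leftPar_iff.mp h
  refine leftPar_iff.mpr ⟨c * g * c⁻¹, by simp [hc, hg], ?_⟩
  rw [lmul_lmul, lmul_lmul, mul_assoc, mul_assoc, inv_mul_cancel₀ hc, mul_one]

lemma rp_rmul_congr {M N : Submodule F H} (c : H) (hc : c ≠ 0) (h : RightPar F H M N) :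
    RightPar F H (rmul c M) (rmul c N) := by
  obtain ⟨g, hg, rfl⟩ := rightPar_iff.mp h
  refine rightPar_iff.mpr ⟨c⁻¹ * g * c, by simp [hc, hg], ?_⟩
  rw [rmul_rmul, rmul_rmul, ← mul_assoc, ← mul_assoc, mul_inv_cancel₀ hc, one_mul]

lemma lp_conj {M N : Submodule F H} (c : H) (hc : c ≠ 0) (h : LeftPar F H M N) :
    LeftPar F H (lmul c (rmul c⁻¹ M)) (lmul c (rmul c⁻¹ N)) :=
  lp_lmul_congr c hc (lp_rmul_congr c⁻¹ h)

lemma rp_conj {M N : Submodule F H} (c : H) (hc : c ≠ 0) (h : RightPar F H M N) :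
    RightPar F H (lmul c (rmul c⁻¹ M)) (lmul c (rmul c⁻¹ N)) := by
  rw [lmul_rmul, lmul_rmul]
  exact rp_rmul_congr c⁻¹ (inv_ne_zero hc) (rp_lmul_congr c h)

lemma conj_conj_inv (c : H) (hc : c ≠ 0) (X : Line F H) :
    conjLine c hc (conjLine c⁻¹ (inv_ne_zero hc) X) = X := by
  apply Subtype.ext
  show lmul c (rmul c⁻¹ (lmul c⁻¹ (rmul c⁻¹⁻¹ X.1))) = X.1
  rw [inv_inv, ← lmul_rmul c⁻¹ c⁻¹, lmul_lmul, rmul_rmul, mul_inv_cancel₀ hc, lmul_one,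
    rmul_one]

lemma conj_inv_conj (c : H) (hc : c ≠ 0) (X : Line F H) :
    conjLine c⁻¹ (inv_ne_zero hc) (conjLine c hc X) = X := by
  apply Subtype.ext
  show lmul c⁻¹ (rmul c⁻¹⁻¹ (lmul c (rmul c⁻¹ X.1))) = X.1
  rw [inv_inv, ← lmul_rmul c c, lmul_lmul, rmul_rmul, inv_mul_cancel₀ hc, lmul_one,
    rmul_one]

variable {par : Line F H → Line F H → Prop}

lemma classEq (hpar : IsCliffordLike F H par) {M N : Line F H} (h : par M N) :
    parClass F H par M = parClass F H par N := by
  ext X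
  exact ⟨fun hX => hpar.1.1.trans hX h, fun hX => hpar.1.1.trans hX (hpar.1.1.symm h)⟩

lemma leftClass_eq_of_lp {M L : Line F H} (h : LeftPar F H M.1 L.1) :
    leftClass F H M = leftClass F H L := by
  ext X
  exact ⟨fun hX => lp_trans hX h, fun hX => lp_trans hX (lp_symm h)⟩

lemma rightClass_eq_of_rp {M L : Line F H} (h : RightPar F H M.1 L.1) :
    rightClass F H M = rightClass F H L := by
  ext X
  exact ⟨fun hX => rp_trans hX h, fun hX => rp_trans hX (rp_symm h)⟩

variable (hpar : IsCliffordLike F H par)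
include hpar

/-- Left translations preserve a Clifford-like parallelism. -/
lemma par_lineL (g : H) (hg : g ≠ 0) (M N : Line F H) (h : par M N) :
    par (lineL g hg M) (lineL g hg N) := by
  rcases hpar.2 M with hL | hR
  · have hNM : N ∈ parClass F H par M := hpar.1.1.symm h
    rw [hL] at hNM
    have h1 : LeftPar F H (lineL g hg N).1 M.1 := lp_trans (lp_symm (lp_lmul hg N.1)) hNM
    have h2 : LeftPar F H (lineL g hg M).1 M.1 := lp_symm (lp_lmul hg M.1)
    have p1 : par (lineL g hg N) M := by
      have : lineL g hg N ∈ leftClass F H M := h1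
      rw [← hL] at this; exact this
    have p2 : par (lineL g hg M) M := by
      have : lineL g hg M ∈ leftClass F H M := h2
      rw [← hL] at this; exact this
    exact hpar.1.1.trans p2 (hpar.1.1.symm p1)
  · have hNM : N ∈ parClass F H par M := hpar.1.1.symm h
    rw [hR] at hNM
    have h3 : RightPar F H (lineL g hg N).1 (lineL g hg M).1 := rp_lmul_congr g hNM
    rcases hpar.2 (lineL g hg M) with h2L | h2R
    · have hM_mem : M ∈ leftClass F H (lineL g hg M) := lp_lmul hg M.1
      have pM : par M (lineL g hg M) := by rw [← h2L] at hM_mem; exact hM_mem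
      have hce : parClass F H par M = parClass F H par (lineL g hg M) := classEq hpar pM
      have hbM : RightPar F H (lineL g hg M).1 M.1 := by
        have hrefl : lineL g hg M ∈ parClass F H par (lineL g hg M) := hpar.1.1.refl _
        rw [← hce, hR] at hrefl; exact hrefl
      obtain ⟨k, hk, hkeq⟩ := rightPar_iff.mp hbM
      rw [lineL_coe] at hkeq
      obtain ⟨g2, hg2, hg2eq⟩ := rightPar_iff.mp hNM
      have hNval : N.1 = rmul g2⁻¹ M.1 := by
        rw [hg2eq, rmul_rmul, mul_inv_cancel₀ hg2, rmul_one]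
      have hgM : lmul g M.1 = rmul k⁻¹ M.1 := by
        conv_rhs => rw [hkeq]
        rw [rmul_rmul, mul_inv_cancel₀ hk, rmul_one]
      have hgN : lmul g N.1 = rmul (k⁻¹ * g2⁻¹) M.1 := by
        rw [hNval, lmul_rmul, hgM, rmul_rmul]
      have htarget : RightPar F H (lineL g hg N).1 M.1 := by
        refine rightPar_iff.mpr ⟨g2 * k, mul_ne_zero hg2 hk, ?_⟩
        rw [lineL_coe, hgN, rmul_rmul]
        rw [show k⁻¹ * g2⁻¹ * (g2 * k) = 1 by
          rw [mul_assoc, ← mul_assoc g2⁻¹, inv_mul_cancel₀ hg2, one_mul, inv_mul_cancel₀ hk]]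
        rw [rmul_one]
      have pN : par (lineL g hg N) M := by
        have : lineL g hg N ∈ rightClass F H M := htarget
        rw [← hR] at this; exact this
      have pM2 : par (lineL g hg M) M := by
        have : lineL g hg M ∈ rightClass F H M := hbM
        rw [← hR] at this; exact this
      exact hpar.1.1.trans pM2 (hpar.1.1.symm pN)
    · have : lineL g hg N ∈ rightClass F H (lineL g hg M) := h3
      rw [← h2R] at this
      exact hpar.1.1.symm this

/-- Right translations preserve a Clifford-like parallelism. -/
lemma par_lineR (g : H) (hg : g ≠ 0) (M N : Line F H) (h : par M N) :
    par (lineR g hg M) (lineR g hg N) := by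
  rcases hpar.2 M with hL | hR
  · have hNM : N ∈ parClass F H par M := hpar.1.1.symm h
    rw [hL] at hNM
    have h3 : LeftPar F H (lineR g hg N).1 (lineR g hg M).1 := lp_rmul_congr g hNM
    rcases hpar.2 (lineR g hg M) with h2L | h2R
    · have : lineR g hg N ∈ leftClass F H (lineR g hg M) := h3
      rw [← h2L] at this
      exact hpar.1.1.symm this
    · have hM_mem : M ∈ rightClass F H (lineR g hg M) := rp_rmul hg M.1
      have pM : par M (lineR g hg M) := by rw [← h2R] at hM_mem; exact hM_mem
      have hce : parClass F H par M = parClass F H par (lineR g hg M) := classEq hpar pM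
      have hbM : LeftPar F H (lineR g hg M).1 M.1 := by
        have hrefl : lineR g hg M ∈ parClass F H par (lineR g hg M) := hpar.1.1.refl _
        rw [← hce, hL] at hrefl; exact hrefl
      obtain ⟨k, hk, hkeq⟩ := leftPar_iff.mp hbM
      rw [lineR_coe] at hkeq
      obtain ⟨g2, hg2, hg2eq⟩ := leftPar_iff.mp hNM
      have hNval : N.1 = lmul g2⁻¹ M.1 := by
        rw [hg2eq, lmul_lmul, inv_mul_cancel₀ hg2, lmul_one]
      have hgM : rmul g M.1 = lmul k⁻¹ M.1 := by
        conv_rhs => rw [hkeq]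
        rw [lmul_lmul, inv_mul_cancel₀ hk, lmul_one]
      have hgN : rmul g N.1 = lmul (g2⁻¹ * k⁻¹) M.1 := by
        rw [hNval, ← lmul_rmul, hgM, lmul_lmul]
      have htarget : LeftPar F H (lineR g hg N).1 M.1 := by
        refine leftPar_iff.mpr ⟨k * g2, mul_ne_zero hk hg2, ?_⟩
        rw [lineR_coe, hgN, lmul_lmul]
        rw [show k * g2 * (g2⁻¹ * k⁻¹) = 1 by
          rw [mul_assoc, ← mul_assoc g2, mul_inv_cancel₀ hg2, one_mul, mul_inv_cancel₀ hk]]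
        rw [lmul_one]
      have pN : par (lineR g hg N) M := by
        have : lineR g hg N ∈ leftClass F H M := htarget
        rw [← hL] at this; exact this
      have pM2 : par (lineR g hg M) M := by
        have : lineR g hg M ∈ leftClass F H M := hbM
        rw [← hL] at this; exact this
      exact hpar.1.1.trans pM2 (hpar.1.1.symm pN)
  · have hNM : N ∈ parClass F H par M := hpar.1.1.symm h
    rw [hR] at hNM
    have h1 : RightPar F H (lineR g hg N).1 M.1 := rp_trans (rp_symm (rp_rmul hg N.1)) hNM
    have h2 : RightPar F H (lineR g hg M).1 M.1 := rp_symm (rp_rmul hg M.1)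
    have p1 : par (lineR g hg N) M := by
      have : lineR g hg N ∈ rightClass F H M := h1
      rw [← hR] at this; exact this
    have p2 : par (lineR g hg M) M := by
      have : lineR g hg M ∈ rightClass F H M := h2
      rw [← hR] at this; exact this
    exact hpar.1.1.trans p2 (hpar.1.1.symm p1)

end Par
section Par2

/-- Image of a line under a linear automorphism. -/
noncomputable def lineMap (γ : H ≃ₗ[F] H) (M : Line F H) : Line F H :=
  ⟨M.1.map (γ : H →ₗ[F] H), by rw [LinearEquiv.finrank_map_eq]; exact M.2⟩

lemma lineMap_coe (γ : H ≃ₗ[F] H) (M : Line F H) :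
    (lineMap γ M).1 = M.1.map (γ : H →ₗ[F] H) := rfl

lemma lp_map (γ : H ≃ₗ[F] H) (hmul : ∀ x y : H, γ (x * y) = γ x * γ y)
    {A B : Submodule F H} (h : LeftPar F H A B) :
    LeftPar F H (A.map (γ : H →ₗ[F] H)) (B.map (γ : H →ₗ[F] H)) := by
  obtain ⟨g, hg, rfl⟩ := leftPar_iff.mp h
  refine leftPar_iff.mpr ⟨γ g, fun h0 => hg (γ.map_eq_zero_iff.mp h0), ?_⟩
  ext z
  simp only [Submodule.mem_map, mem_lmul]
  constructor
  · rintro ⟨u, ⟨a, ha, rfl⟩, rfl⟩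
    exact ⟨γ a, ⟨a, ha, rfl⟩, (hmul g a).symm⟩
  · rintro ⟨u, ⟨a, ha, rfl⟩, rfl⟩
    exact ⟨g * a, ⟨a, ha, rfl⟩, hmul g a⟩

lemma rp_map (γ : H ≃ₗ[F] H) (hmul : ∀ x y : H, γ (x * y) = γ x * γ y)
    {A B : Submodule F H} (h : RightPar F H A B) :
    RightPar F H (A.map (γ : H →ₗ[F] H)) (B.map (γ : H →ₗ[F] H)) := by
  obtain ⟨g, hg, rfl⟩ := rightPar_iff.mp h
  refine rightPar_iff.mpr ⟨γ g, fun h0 => hg (γ.map_eq_zero_iff.mp h0), ?_⟩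
  ext z
  simp only [Submodule.mem_map, mem_rmul]
  constructor
  · rintro ⟨u, ⟨a, ha, rfl⟩, rfl⟩
    exact ⟨γ a, ⟨a, ha, rfl⟩, (hmul a g).symm⟩
  · rintro ⟨u, ⟨a, ha, rfl⟩, rfl⟩
    exact ⟨a * g, ⟨a, ha, rfl⟩, hmul a g⟩

variable {par : Line F H → Line F H → Prop}
variable (hpar : IsCliffordLike F H par)
include hpar

lemma par_lineL_iff (g : H) (hg : g ≠ 0) (M N : Line F H) :
    par M N ↔ par (lineL g hg M) (lineL g hg N) := by
  constructor
  · exact par_lineL hpar g hg M N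
  · intro h
    have hinv : lineL g⁻¹ (inv_ne_zero hg) (lineL g hg M) = M := by
      apply Subtype.ext
      show lmul g⁻¹ (lmul g M.1) = M.1
      rw [lmul_lmul, inv_mul_cancel₀ hg, lmul_one]
    have hinv' : lineL g⁻¹ (inv_ne_zero hg) (lineL g hg N) = N := by
      apply Subtype.ext
      show lmul g⁻¹ (lmul g N.1) = N.1
      rw [lmul_lmul, inv_mul_cancel₀ hg, lmul_one]
    have := par_lineL hpar g⁻¹ (inv_ne_zero hg) _ _ h
    rwa [hinv, hinv'] at this

lemma par_lineR_iff (g : H) (hg : g ≠ 0) (M N : Line F H) :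
    par M N ↔ par (lineR g hg M) (lineR g hg N) := by
  constructor
  · exact par_lineR hpar g hg M N
  · intro h
    have hinv : lineR g⁻¹ (inv_ne_zero hg) (lineR g hg M) = M := by
      apply Subtype.ext
      show rmul g⁻¹ (rmul g M.1) = M.1
      rw [rmul_rmul, mul_inv_cancel₀ hg, rmul_one]
    have hinv' : lineR g⁻¹ (inv_ne_zero hg) (lineR g hg N) = N := by
      apply Subtype.ext
      show rmul g⁻¹ (rmul g N.1) = N.1
      rw [rmul_rmul, mul_inv_cancel₀ hg, rmul_one]
    have := par_lineR hpar g⁻¹ (inv_ne_zero hg) _ _ h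
    rwa [hinv, hinv'] at this

lemma par_conj_iff (c : H) (hc : c ≠ 0) (M N : Line F H) :
    par M N ↔ par (conjLine c hc M) (conjLine c hc N) :=
  (par_lineR_iff hpar c⁻¹ (inv_ne_zero hc) M N).trans
    (par_lineL_iff hpar c hc _ _)

lemma conj_class_left (c : H) (hc : c ≠ 0) (L : Line F H)
    (hcl : parClass F H par L = leftClass F H L) :
    parClass F H par (conjLine c hc L) = leftClass F H (conjLine c hc L) := by
  ext X
  have hXeq : X = conjLine c hc (conjLine c⁻¹ (inv_ne_zero hc) X) :=
    (conj_conj_inv c hc X).symm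
  set X₀ := conjLine c⁻¹ (inv_ne_zero hc) X with hX₀
  constructor
  · intro hX
    have hpX : par X₀ L := by
      rw [hXeq] at hX
      exact (par_conj_iff hpar c hc X₀ L).mpr hX
    have hmem : X₀ ∈ leftClass F H L := by rw [← hcl]; exact hpX
    have hlp : LeftPar F H X₀.1 L.1 := hmem
    have h2 := lp_conj c hc hlp
    show LeftPar F H X.1 (conjLine c hc L).1
    rw [hXeq]
    exact h2
  · intro hX
    have hlpX : LeftPar F H X.1 (conjLine c hc L).1 := hX
    have h2 := lp_conj c⁻¹ (inv_ne_zero hc) hlpX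
    have e1 : (conjLine c⁻¹ (inv_ne_zero hc) (conjLine c hc L)).1 = L.1 :=
      congrArg Subtype.val (conj_inv_conj c hc L)
    have hlp0 : LeftPar F H X₀.1 L.1 := by
      rw [← e1]
      exact h2
    have hmem : X₀ ∈ leftClass F H L := hlp0
    rw [← hcl] at hmem
    have := (par_conj_iff hpar c hc X₀ L).mp hmem
    rw [← hXeq] at this
    exact this

lemma conj_class_right (c : H) (hc : c ≠ 0) (L : Line F H)
    (hcl : parClass F H par L = rightClass F H L) :
    parClass F H par (conjLine c hc L) = rightClass F H (conjLine c hc L) := by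
  ext X
  have hXeq : X = conjLine c hc (conjLine c⁻¹ (inv_ne_zero hc) X) :=
    (conj_conj_inv c hc X).symm
  set X₀ := conjLine c⁻¹ (inv_ne_zero hc) X with hX₀
  constructor
  · intro hX
    have hpX : par X₀ L := by
      rw [hXeq] at hX
      exact (par_conj_iff hpar c hc X₀ L).mpr hX
    have hmem : X₀ ∈ rightClass F H L := by rw [← hcl]; exact hpX
    have hrp : RightPar F H X₀.1 L.1 := hmem
    have h2 := rp_conj c hc hrp
    show RightPar F H X.1 (conjLine c hc L).1
    rw [hXeq]
    exact h2
  · intro hX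
    have hrpX : RightPar F H X.1 (conjLine c hc L).1 := hX
    have h2 := rp_conj c⁻¹ (inv_ne_zero hc) hrpX
    have e1 : (conjLine c⁻¹ (inv_ne_zero hc) (conjLine c hc L)).1 = L.1 :=
      congrArg Subtype.val (conj_inv_conj c hc L)
    have hrp0 : RightPar F H X₀.1 L.1 := by
      rw [← e1]
      exact h2
    have hmem : X₀ ∈ rightClass F H L := hrp0
    rw [← hcl] at hmem
    have := (par_conj_iff hpar c hc X₀ L).mp hmem
    rw [← hXeq] at this
    exact this

variable (hcenter : CenterEqF F H) (hdim : Module.finrank F H = 4)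
include hcenter hdim

omit hpar in
/-- For a line through 1, the image under a multiplicative linear automorphism
is a conjugate of the line. -/
lemma lineMap_eq_conj (γ : H ≃ₗ[F] H) (hone : γ 1 = 1)
    (hmul : ∀ x y : H, γ (x * y) = γ x * γ y)
    (L : Line F H) (h1L : (1 : H) ∈ L.1) :
    ∃ c : H, ∃ hc : c ≠ 0, lineMap γ L = conjLine c hc L := by
  haveI : FiniteDimensional F H := haveFD hdim
  obtain ⟨q, hqL, hq1, hLspan⟩ := line_through_one L.2 h1L
  obtain ⟨t, n, hquad⟩ := exists_quadratic hcenter hdim hq1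
  have hsymm1 : γ.symm (1 : H) = 1 := by
    conv_lhs => rw [← hone]
    exact γ.symm_apply_apply 1
  have hq'1 : γ q ∉ Submodule.span F {(1 : H)} := by
    intro hin
    obtain ⟨a, ha⟩ := Submodule.mem_span_singleton.mp hin
    apply hq1
    have : q = a • (1 : H) := by
      have := congrArg γ.symm ha.symm
      rwa [γ.symm_apply_apply, map_smul, hsymm1] at this
    rw [this]
    exact Submodule.smul_mem _ _ (Submodule.mem_span_singleton_self _)
  have hquad' : γ q * γ q = t • γ q + n • (1 : H) := by
    rw [← hmul, hquad, map_add, map_smul, map_smul, hone]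
  obtain ⟨c, hc0, hconj⟩ := conj_exists hcenter hq1 hquad hquad'
  refine ⟨c, hc0, ?_⟩
  apply Subtype.ext
  have hkon : c * (q * c⁻¹) = γ q := by
    rw [← mul_assoc, ← hconj, mul_assoc, mul_inv_cancel₀ hc0, mul_one]
  have lhs : (lineMap γ L).1 = Submodule.span F {(1 : H), γ q} := by
    rw [lineMap_coe, hLspan, Submodule.map_span, Set.image_pair]
    simp only [LinearEquiv.coe_coe]
    rw [hone]
  have rhs : (conjLine c hc0 L).1 = Submodule.span F {(1 : H), γ q} := by
    rw [conjLine_coe, hLspan]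
    show Submodule.map (LinearMap.mulLeft F c)
      (Submodule.map (LinearMap.mulRight F c⁻¹) (Submodule.span F {1, q})) = _
    rw [Submodule.map_span, Set.image_pair, Submodule.map_span, Set.image_pair]
    simp only [LinearMap.mulRight_apply, LinearMap.mulLeft_apply]
    rw [one_mul, mul_inv_cancel₀ hc0, hkon]
  rw [lhs, rhs]

/-- A multiplicative linear automorphism fixing 1 preserves a Clifford-like parallelism. -/
lemma aut_par (γ : H ≃ₗ[F] H) (hone : γ 1 = 1)
    (hmul : ∀ x y : H, γ (x * y) = γ x * γ y)
    (M N : Line F H) (h : par M N) : par (lineMap γ M) (lineMap γ N) := by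
  haveI : FiniteDimensional F H := haveFD hdim
  have hMbot : M.1 ≠ ⊥ := by
    intro hbot
    have := M.2
    rw [hbot] at this
    simp [finrank_bot] at this
  obtain ⟨m, hm, hm0⟩ := Submodule.exists_mem_ne_zero_of_ne_bot hMbot
  have hminv : (m⁻¹ : H) ≠ 0 := inv_ne_zero hm0
  rcases hpar.2 M with hL | hR
  · set L := lineL m⁻¹ hminv M with hLdef
    have h1L : (1 : H) ∈ L.1 := mem_lmul.mpr ⟨m, hm, inv_mul_cancel₀ hm0⟩
    have hML : LeftPar F H M.1 L.1 := lp_lmul hminv M.1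
    have hLM : LeftPar F H L.1 M.1 := lp_symm hML
    have hparLM : par L M := by
      have : L ∈ leftClass F H M := hLM
      rw [← hL] at this; exact this
    have hclassL : parClass F H par L = leftClass F H L := by
      rw [classEq hpar hparLM, hL, leftClass_eq_of_lp hML]
    obtain ⟨c, hc0, hkey⟩ := lineMap_eq_conj hcenter hdim γ hone hmul L h1L
    have htypeL : parClass F H par (lineMap γ L) = leftClass F H (lineMap γ L) := by
      rw [hkey]
      exact conj_class_left hpar c hc0 L hclassL
    have hlpγML : LeftPar F H (lineMap γ M).1 (lineMap γ L).1 := lp_map γ hmul hML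
    have hparγML : par (lineMap γ M) (lineMap γ L) := by
      have : lineMap γ M ∈ leftClass F H (lineMap γ L) := hlpγML
      rw [← htypeL] at this; exact this
    have htypeM : parClass F H par (lineMap γ M) = leftClass F H (lineMap γ M) := by
      rw [classEq hpar hparγML, htypeL, leftClass_eq_of_lp (lp_symm hlpγML)]
    have hNM : LeftPar F H N.1 M.1 := by
      have : N ∈ leftClass F H M := by rw [← hL]; exact hpar.1.1.symm h
      exact this
    have hγNM : LeftPar F H (lineMap γ N).1 (lineMap γ M).1 := lp_map γ hmul hNM
    have : lineMap γ N ∈ parClass F H par (lineMap γ M) := by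
      rw [htypeM]; exact hγNM
    exact hpar.1.1.symm this
  · set L := lineR m⁻¹ hminv M with hLdef
    have h1L : (1 : H) ∈ L.1 := mem_rmul.mpr ⟨m, hm, mul_inv_cancel₀ hm0⟩
    have hML : RightPar F H M.1 L.1 := rp_rmul hminv M.1
    have hLM : RightPar F H L.1 M.1 := rp_symm hML
    have hparLM : par L M := by
      have : L ∈ rightClass F H M := hLM
      rw [← hR] at this; exact this
    have hclassL : parClass F H par L = rightClass F H L := by
      rw [classEq hpar hparLM, hR, rightClass_eq_of_rp hML]
    obtain ⟨c, hc0, hkey⟩ := lineMap_eq_conj hcenter hdim γ hone hmul L h1L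
    have htypeL : parClass F H par (lineMap γ L) = rightClass F H (lineMap γ L) := by
      rw [hkey]
      exact conj_class_right hpar c hc0 L hclassL
    have hrpγML : RightPar F H (lineMap γ M).1 (lineMap γ L).1 := rp_map γ hmul hML
    have hparγML : par (lineMap γ M) (lineMap γ L) := by
      have : lineMap γ M ∈ rightClass F H (lineMap γ L) := hrpγML
      rw [← htypeL] at this; exact this
    have htypeM : parClass F H par (lineMap γ M) = rightClass F H (lineMap γ M) := by
      rw [classEq hpar hparγML, htypeL, rightClass_eq_of_rp (rp_symm hrpγML)]
    have hNM : RightPar F H N.1 M.1 := by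
      have : N ∈ rightClass F H M := by rw [← hR]; exact hpar.1.1.symm h
      exact this
    have hγNM : RightPar F H (lineMap γ N).1 (lineMap γ M).1 := rp_map γ hmul hNM
    have : lineMap γ N ∈ parClass F H par (lineMap γ M) := by
      rw [htypeM]; exact hγNM
    exact hpar.1.1.symm this

end Par2
section Cancel

lemma lp_lmul_cancel_iff {c : H} (hc : c ≠ 0) (A B : Submodule F H) :
    LeftPar F H (lmul c A) (lmul c B) ↔ LeftPar F H A B := by
  constructor
  · intro h
    have := lp_lmul_congr c⁻¹ (inv_ne_zero hc) h
    rwa [lmul_lmul, lmul_lmul, inv_mul_cancel₀ hc, lmul_one, lmul_one] at this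
  · exact lp_lmul_congr c hc

end Cancel
end CliffAux

open CliffAux in
/-- Every `F`-linear bijection of `H` preserving the left Clifford parallelism `∥ℓ`
also preserves any Clifford-like parallelism `∥`. -/
theorem linear_leftPar_preserving_preserves
    (hcenter : CenterEqF F H) (hdim : Module.finrank F H = 4)
    (par : Line F H → Line F H → Prop) (hpar : IsCliffordLike F H par)
    (β : H → H) (hbij : Function.Bijective β)
    (hadd : ∀ x y : H, β (x + y) = β x + β y)
    (hsmul : ∀ (a : F) (x : H), β (a • x) = a • β x)
    (hβℓ : Preserves F H β (fun M N : Line F H => LeftPar F H M.1 N.1)) :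
    Preserves F H β par := by
  classical
  set eL : H →ₗ[F] H :=
    { toFun := β
      map_add' := hadd
      map_smul' := hsmul } with heL
  set e : H ≃ₗ[F] H := LinearEquiv.ofBijective eL hbij with he
  have heapp : ∀ z : H, e z = β z := fun _ => rfl
  have hβ1 : β 1 ≠ 0 := by
    intro h0
    have h1 : e 1 = e 0 := by rw [heapp 1, h0, map_zero]
    exact one_ne_zero (e.injective h1)
  set h : H := β 1 with hh
  have hhinv : (h⁻¹ : H) ≠ 0 := inv_ne_zero hβ1
  set γ : H ≃ₗ[F] H := e.trans (lmulE h⁻¹ hhinv) with hγ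
  have hγapp : ∀ z : H, γ z = h⁻¹ * β z := fun _ => rfl
  have hγ1 : γ 1 = 1 := by rw [hγapp, ← hh, inv_mul_cancel₀ hβ1]
  -- image of a submodule under γ
  have hγmap : ∀ X : Submodule F H,
      X.map (γ : H →ₗ[F] H) = lmul h⁻¹ (X.map (e : H →ₗ[F] H)) := by
    intro X
    ext z
    simp only [Submodule.mem_map, mem_lmul]
    constructor
    · rintro ⟨a, ha, rfl⟩
      exact ⟨β a, ⟨a, ha, rfl⟩, rfl⟩
    · rintro ⟨u, ⟨a, ha, rfl⟩, rfl⟩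
      exact ⟨a, ha, rfl⟩
  -- the map-form of the hypothesis hβℓ
  have hβℓ' : ∀ X Y : Submodule F H, Module.finrank F X = 2 → Module.finrank F Y = 2 →
      (LeftPar F H X Y ↔ LeftPar F H (X.map (e : H →ₗ[F] H)) (Y.map (e : H →ₗ[F] H))) := by
    intro X Y hX hY
    have hfrX : Module.finrank F (X.map (e : H →ₗ[F] H)) = 2 := by
      rw [LinearEquiv.finrank_map_eq]; exact hX
    have hfrY : Module.finrank F (Y.map (e : H →ₗ[F] H)) = 2 := by
      rw [LinearEquiv.finrank_map_eq]; exact hY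
    exact hβℓ ⟨X, hX⟩ ⟨Y, hY⟩ ⟨X.map (e : H →ₗ[F] H), hfrX⟩ ⟨Y.map (e : H →ₗ[F] H), hfrY⟩
      (Submodule.map_coe _ _) (Submodule.map_coe _ _)
  -- γ preserves left parallelism in map form
  have hpresℓ : ∀ X Y : Submodule F H, Module.finrank F X = 2 → Module.finrank F Y = 2 →
      (LeftPar F H X Y ↔ LeftPar F H (X.map (γ : H →ₗ[F] H)) (Y.map (γ : H →ₗ[F] H))) := by
    intro X Y hX hY
    rw [hγmap X, hγmap Y, lp_lmul_cancel_iff hhinv]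
    exact hβℓ' X Y hX hY
  -- γ is multiplicative
  have hmul : ∀ x y : H, γ (x * y) = γ x * γ y :=
    mult_of_preserves hcenter hdim γ hγ1 hpresℓ
  -- its inverse is multiplicative as well and fixes 1
  have hsymm1 : γ.symm (1 : H) = 1 := by
    conv_lhs => rw [← hγ1]
    exact γ.symm_apply_apply 1
  have hmulsymm : ∀ x y : H, γ.symm (x * y) = γ.symm x * γ.symm y := by
    intro x y
    apply γ.injective
    rw [hmul, γ.apply_symm_apply, γ.apply_symm_apply, γ.apply_symm_apply]
  have hsymmmap : ∀ M : Line F H, lineMap γ.symm (lineMap γ M) = M := by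
    intro M
    apply Subtype.ext
    show (M.1.map (γ : H →ₗ[F] H)).map (γ.symm : H →ₗ[F] H) = M.1
    ext z
    simp only [Submodule.mem_map]
    constructor
    · rintro ⟨u, ⟨a, ha, rfl⟩, rfl⟩
      simpa [γ.symm_apply_apply] using ha
    · intro hz
      exact ⟨γ z, ⟨z, hz, rfl⟩, γ.symm_apply_apply z⟩
  -- γ preserves par
  have hPRES : ∀ M N : Line F H, par M N ↔ par (lineMap γ M) (lineMap γ N) := by
    intro M N
    constructor
    · exact aut_par hpar hcenter hdim γ hγ1 hmul M N
    · intro hMN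
      have := aut_par hpar hcenter hdim γ.symm hsymm1 hmulsymm _ _ hMN
      rwa [hsymmmap M, hsymmmap N] at this
  -- assemble
  intro M N M' N' hM' hN'
  have hM'eq : M' = lineMap e M := by
    apply Subtype.ext
    apply SetLike.ext'
    rw [lineMap_coe, Submodule.map_coe]
    exact hM'
  have hN'eq : N' = lineMap e N := by
    apply Subtype.ext
    apply SetLike.ext'
    rw [lineMap_coe, Submodule.map_coe]
    exact hN'
  have hLh : ∀ M₀ : Line F H, lineL h hβ1 (lineMap γ M₀) = lineMap e M₀ := by
    intro M₀
    apply Subtype.ext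
    show lmul h (M₀.1.map (γ : H →ₗ[F] H)) = M₀.1.map (e : H →ₗ[F] H)
    rw [hγmap, lmul_lmul, mul_inv_cancel₀ hβ1, lmul_one]
  rw [hM'eq, hN'eq]
  calc par M N ↔ par (lineMap γ M) (lineMap γ N) := hPRES M N
  _ ↔ par (lineL h hβ1 (lineMap γ M)) (lineL h hβ1 (lineMap γ N)) :=
      par_lineL_iff hpar h hβ1 _ _
  _ ↔ par (lineMap e M) (lineMap e N) := by rw [hLh M, hLh N]
end
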